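/- arXiv:math/9808020 — 5 statements merged into one kernel-verified Lean document; each statement's English description precedes it below -/
import Mathlib

section
/- Let d be a nonsquare integer, D = diag(√d, -√d), and e₁, e₂ ∈ ℂ² vectors such that e₁, e₂, De₁, De₂ are linearly independent over ℝ. With M_{a,b} as above (diag(a,b) for d > 0; [[0,a+ib],[a-ib,0]] for d < 0) and E_{a,b} = Im(xᵀ M_{a,b} conj(y)), the ℝ-linear map λ: ℝ² → ℝ², (a,b) ↦ (E_{a,b}(e₁,e₂), E_{a,b}(e₁,De₂)) is bijective. -/
open Matrix Complex

/-- `√d` as a complex number. -/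
noncomputable def csqrt (d : ℝ) : ℂ :=
  if 0 ≤ d then (Real.sqrt d : ℂ) else Complex.I * (Real.sqrt (-d) : ℂ)

/-- The matrix `M_{a,b}`: `diag(a,b)` for `d > 0`, `[[0,a+ib],[a-ib,0]]` for `d < 0`. -/
noncomputable def Mab (d : ℤ) (a b : ℝ) : Matrix (Fin 2) (Fin 2) ℂ :=
  if 0 < d then !![(a : ℂ), 0; 0, (b : ℂ)]
  else !![0, (a : ℂ) + b * Complex.I; (a : ℂ) - b * Complex.I, 0]

/-- `E_{a,b}(x,y) = Im (xᵀ M_{a,b} conj(y))`. -/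
noncomputable def Eab (d : ℤ) (a b : ℝ) (x y : Fin 2 → ℂ) : ℝ :=
  (x ⬝ᵥ (Mab d a b).mulVec (star y)).im

/-! For fixed `(a, b)`, `E_{a,b}` is an alternating `ℝ`-bilinear form (because `M_{a,b}` is
Hermitian) for which `D` is self-adjoint (because `Dᵀ M_{a,b} = M_{a,b} D̄`), and `D² = d`. Hence
`E(x, Dx) = 0`, `E(e₂, De₁) = -E(e₁, De₂)` and `E(De₁, De₂) = d E(e₁, e₂)`, so if `λ(a, b) = 0`
the form vanishes on all pairs from the basis `e₁, e₂, De₁, De₂`, hence identically; pairing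
standard basis vectors then shows `M_{a,b} = 0`, i.e. `a = b = 0`. An injective endomorphism of
`ℝ²` is bijective. -/

open ComplexConjugate

namespace LinearMap.IsAlt

variable {R V M : Type*} [CommRing R] [AddCommGroup V] [Module R V] [AddCommGroup M] [Module R M]
  {B : V →ₗ[R] V →ₗ[R] M} {T : V → V}

theorem apply_self_eq_zero_of_symm [IsAddTorsionFree M] (hB : B.IsAlt)
    (hT : ∀ x y, B (T x) y = B x (T y)) (x : V) : B x (T x) = 0 :=
  self_eq_neg.mp (by rw [hB.neg, hT])

theorem eq_zero_of_symm_of_span [IsAddTorsionFree M] (hB : B.IsAlt)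
    (hT : ∀ x y, B (T x) y = B x (T y)) {c : R} (hTT : ∀ x, T (T x) = c • x) {e₁ e₂ : V}
    (hspan : Submodule.span R (Set.range ![e₁, e₂, T e₁, T e₂]) = ⊤)
    (h₁₂ : B e₁ e₂ = 0) (h₁T₂ : B e₁ (T e₂) = 0) : B = 0 := by
  have hswap {x y : V} (h : B x y = 0) : B y x = 0 := hB.eq_iff.mp h
  have h₂T₁ : B e₂ (T e₁) = 0 := by rw [← hT]; exact hswap h₁T₂
  have hT₁T₂ : B (T e₁) (T e₂) = 0 := by rw [hT, hTT, map_smul, h₁₂, smul_zero]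
  have hTT₁ := hB.apply_self_eq_zero_of_symm hT e₁
  have hTT₂ := hB.apply_self_eq_zero_of_symm hT e₂
  refine ext_on_range hspan fun i => ext_on_range hspan fun j => ?_
  fin_cases i <;> fin_cases j <;>
    simp [hB.self_eq_zero, hswap, h₁₂, h₁T₂, h₂T₁, hT₁T₂, hTT₁, hTT₂]

end LinearMap.IsAlt

namespace Matrix

variable {n : Type*} [Fintype n]

noncomputable def imForm (M : Matrix n n ℂ) : (n → ℂ) →ₗ[ℝ] (n → ℂ) →ₗ[ℝ] ℝ :=
  LinearMap.mk₂ ℝ (fun x y => (x ⬝ᵥ M *ᵥ star y).im)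
    (fun x x' y => by simp only [add_dotProduct, add_im])
    (fun r x y => by simp only [smul_dotProduct, smul_im, smul_eq_mul])
    (fun x y y' => by simp only [star_add, mulVec_add, dotProduct_add, add_im])
    (fun r x y => by
      simp only [star_smul, star_trivial, mulVec_smul, dotProduct_smul, smul_im, smul_eq_mul])

theorem imForm_apply (M : Matrix n n ℂ) (x y : n → ℂ) :
    imForm M x y = (x ⬝ᵥ M *ᵥ star y).im := rfl

theorem IsHermitian.isAlt_imForm {M : Matrix n n ℂ} (hM : M.IsHermitian) : (imForm M).IsAlt :=
  fun x => by simpa [imForm_apply] using hM.im_star_dotProduct_mulVec_self (star x)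

theorem star_mulVec_eq_map_star (D : Matrix n n ℂ) (y : n → ℂ) :
    star (D *ᵥ y) = D.map star *ᵥ star y := by
  ext i; simp [mulVec, dotProduct]

theorem imForm_mulVec_left {M D : Matrix n n ℂ} (h : Dᵀ * M = M * D.map star) (x y : n → ℂ) :
    imForm M (D *ᵥ x) y = imForm M x (D *ᵥ y) := by
  rw [imForm_apply, imForm_apply, star_mulVec_eq_map_star, mulVec_mulVec, ← h, ← mulVec_mulVec,
    dotProduct_comm, dotProduct_mulVec, mulVec_transpose, dotProduct_comm]

theorem eq_zero_of_imForm_eq_zero [DecidableEq n] {M : Matrix n n ℂ} (h : imForm M = 0) :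
    M = 0 := by
  ext i j
  have him := LinearMap.congr_fun₂ h (Pi.single i 1) (Pi.single j 1)
  have hre := LinearMap.congr_fun₂ h (Pi.single i 1) (Pi.single j I)
  apply Complex.ext
  · simpa [imForm_apply] using hre
  · simpa [imForm_apply] using him

end Matrix

theorem csqrt_mul_self (d : ℝ) : csqrt d * csqrt d = d := by
  unfold csqrt
  split_ifs with hd
  · rw [← ofReal_mul, Real.mul_self_sqrt hd]
  · rw [mul_mul_mul_comm, I_mul_I, ← ofReal_mul, Real.mul_self_sqrt (by linarith)]; simp

theorem conj_csqrt_of_nonneg {d : ℝ} (hd : 0 ≤ d) : conj (csqrt d) = csqrt d := by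
  simp [csqrt, hd, Complex.conj_ofReal]

theorem conj_csqrt_of_nonpos {d : ℝ} (hd : d ≤ 0) : conj (csqrt d) = -csqrt d := by
  rcases hd.lt_or_eq with hd | rfl
  · simp [csqrt, hd.not_ge]
  · simp [csqrt]

theorem Mab_isHermitian (d : ℤ) (a b : ℝ) : (Mab d a b).IsHermitian := by
  unfold Mab
  split_ifs
  all_goals
    ext i j; fin_cases i <;> fin_cases j <;> simp [Complex.ext_iff]

theorem Mab_add (d : ℤ) (a b a' b' : ℝ) :
    Mab d (a + a') (b + b') = Mab d a b + Mab d a' b' := by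
  unfold Mab
  split_ifs
  all_goals
    ext i j; fin_cases i <;> fin_cases j <;> simp <;> ring

theorem Mab_smul (d : ℤ) (r a b : ℝ) : Mab d (r * a) (r * b) = r • Mab d a b := by
  unfold Mab
  split_ifs
  all_goals
    ext i j; fin_cases i <;> fin_cases j <;> simp <;> ring

theorem eq_zero_of_Mab_eq_zero {d : ℤ} {a b : ℝ} (h : Mab d a b = 0) : a = 0 ∧ b = 0 := by
  have h₀₀ := congr_fun₂ h 0 0
  have h₀₁ := congr_fun₂ h 0 1
  have h₁₁ := congr_fun₂ h 1 1
  unfold Mab at h₀₀ h₀₁ h₁₁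
  split_ifs at h₀₀ h₀₁ h₁₁
  · simp_all
  · simpa [Complex.ext_iff] using h₀₁

theorem csqrt_diag_mulVec_mulVec (d : ℤ) (x : Fin 2 → ℂ) :
    !![csqrt d, 0; 0, -csqrt d] *ᵥ (!![csqrt d, 0; 0, -csqrt d] *ᵥ x) = (d : ℝ) • x := by
  rw [mulVec_mulVec]
  ext i; fin_cases i <;> simp [mulVec, dotProduct, Fin.sum_univ_two, csqrt_mul_self]

theorem csqrt_diag_transpose_mul_Mab (d : ℤ) (a b : ℝ) :
    (!![csqrt d, 0; 0, -csqrt d])ᵀ * Mab d a b =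
      Mab d a b * (!![csqrt d, 0; 0, -csqrt d]).map star := by
  unfold Mab
  split_ifs with hd
  · have h := conj_csqrt_of_nonneg (d := d) (by exact_mod_cast hd.le)
    ext i j
    fin_cases i <;> fin_cases j <;> simp [Matrix.mul_apply, Fin.sum_univ_two, h, mul_comm]
  · have h := conj_csqrt_of_nonpos (d := d) (by exact_mod_cast not_lt.mp hd)
    ext i j
    fin_cases i <;> fin_cases j <;> simp [Matrix.mul_apply, Fin.sum_univ_two, h, mul_comm]

noncomputable def EabLinear (d : ℤ) (x y : Fin 2 → ℂ) : ℝ × ℝ →ₗ[ℝ] ℝ where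
  toFun p := Eab d p.1 p.2 x y
  map_add' p q := by
    simp only [Eab, Prod.fst_add, Prod.snd_add, Mab_add, add_mulVec, dotProduct_add, add_im]
  map_smul' r p := by
    simp only [Eab, Prod.smul_fst, Prod.smul_snd, smul_eq_mul, Mab_smul, smul_mulVec,
      dotProduct_smul, smul_im, RingHom.id_apply]

theorem stmt_9_general (d : ℤ)
    (D : Matrix (Fin 2) (Fin 2) ℂ)
    (hD : D = !![csqrt (d : ℝ), 0; 0, -csqrt (d : ℝ)])
    (e₁ e₂ : Fin 2 → ℂ)
    (hli : LinearIndependent ℝ ![e₁, e₂, D.mulVec e₁, D.mulVec e₂]) :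
    Function.Bijective (fun p : ℝ × ℝ =>
      (Eab d p.1 p.2 e₁ e₂, Eab d p.1 p.2 e₁ (D.mulVec e₂))) := by
  have hinj : Function.Injective ((EabLinear d e₁ e₂).prod (EabLinear d e₁ (D *ᵥ e₂))) := by
    rw [injective_iff_map_eq_zero]
    rintro ⟨a, b⟩ h
    subst hD
    have hspan := hli.span_eq_top_of_card_eq_finrank (by simp [Module.finrank_pi_fintype])
    have hE : imForm (Mab d a b) = 0 :=
      (IsHermitian.isAlt_imForm (Mab_isHermitian d a b)).eq_zero_of_symm_of_span
        (imForm_mulVec_left (csqrt_diag_transpose_mul_Mab d a b)) (csqrt_diag_mulVec_mulVec d)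
        hspan (congrArg Prod.fst h) (congrArg Prod.snd h)
    simpa [Prod.ext_iff] using eq_zero_of_Mab_eq_zero (eq_zero_of_imForm_eq_zero hE)
  exact ⟨hinj, LinearMap.injective_iff_surjective.mp hinj⟩

/-- if `e₁, e₂, De₁, De₂` are ℝ-linearly independent then the
ℝ-linear map `(a,b) ↦ (E_{a,b}(e₁,e₂), E_{a,b}(e₁,De₂))` is bijective. -/
theorem stmt_9 (d : ℤ) (hd : ¬ ∃ n : ℤ, n ^ 2 = d)
    (D : Matrix (Fin 2) (Fin 2) ℂ)
    (hD : D = !![csqrt (d : ℝ), 0; 0, -csqrt (d : ℝ)])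
    (e₁ e₂ : Fin 2 → ℂ)
    (hli : LinearIndependent ℝ ![e₁, e₂, D.mulVec e₁, D.mulVec e₂]) :
    Function.Bijective (fun p : ℝ × ℝ =>
      (Eab d p.1 p.2 e₁ e₂, Eab d p.1 p.2 e₁ (D.mulVec e₂))) :=
  stmt_9_general d D hD e₁ e₂ hli
end

section
/- Let Λ ⊆ ℂ² be a lattice, D nonscalar with D² = d·I, d > 0 a nonsquare integer, and DΛ ⊆ Λ. Then there exists a positive definite hermitian form H on ℂ² with Im H(Λ, Λ) ⊆ ℤ and with (x,y) ↦ H(x,Dy) also satisfying Im H(Λ, DΛ) ⊆ ℤ; in particular NS(ℂ²/Λ) contains a positive definite form, so the torus ℂ²/Λ is algebraic (an abelian surface). -/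
open Matrix Complex
open scoped ComplexOrder

namespace Stmt11

abbrev V := Fin 2 → ℂ

/-- A real alternating bilinear form on `ℂ²`. -/
structure Form where
  E : V → V → ℝ
  add_l : ∀ x x' y, E (x + x') y = E x y + E x' y
  add_r : ∀ x y y', E x (y + y') = E x y + E x y'
  smul_l : ∀ (a : ℝ) (x y : V), E (a • x) y = a * E x y
  smul_r : ∀ (a : ℝ) (x y : V), E x (a • y) = a * E x y
  alt : ∀ x, E x x = 0

namespace Form

variable (f : Form)

lemma zero_l (y : V) : f.E 0 y = 0 := by
  simpa using f.smul_l 0 0 y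

lemma zero_r (x : V) : f.E x 0 = 0 := by
  simpa using f.smul_r 0 x 0

lemma antisymm (x y : V) : f.E x y = - f.E y x := by
  have h := f.alt (x + y)
  rw [f.add_l, f.add_r, f.add_r, f.alt, f.alt] at h
  linarith

/-- `I • (I • x) = (-1 : ℝ) • x`. -/
lemma Ismul_Ismul (x : V) : Complex.I • (Complex.I • x) = (-1 : ℝ) • x := by
  rw [smul_smul, Complex.I_mul_I]
  funext i
  simp

lemma csmul_decomp (c : ℂ) (x : V) :
    c • x = c.re • x + c.im • (Complex.I • x) := by
  funext i
  simp only [Pi.add_apply, Pi.smul_apply, Complex.real_smul, smul_eq_mul]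
  rw [show ((c.re : ℂ) * x i + (c.im : ℂ) * (Complex.I * x i))
      = ((c.re : ℂ) + (c.im : ℂ) * Complex.I) * x i by ring, Complex.re_add_im]

/-- standard basis vectors of `ℂ²` -/
def ev (j : Fin 2) : V := Pi.single j 1

lemma ev_ne_zero (j : Fin 2) : ev j ≠ 0 := by
  intro h
  have := congrFun h j
  simp [ev] at this

lemma vec_expand (x : V) : x = x 0 • ev 0 + x 1 • ev 1 := by
  funext i
  fin_cases i <;> simp [ev, Pi.single_apply]

variable (f : Form)

/-- The hermitian form associated to `E`. -/
def Hf (x y : V) : ℂ := (f.E (Complex.I • x) y : ℝ) + (f.E x y : ℝ) * Complex.I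

lemma Hf_add_l (x x' y : V) : f.Hf (x + x') y = f.Hf x y + f.Hf x' y := by
  simp only [Hf, smul_add, f.add_l]
  push_cast
  ring

lemma Hf_add_r (x y y' : V) : f.Hf x (y + y') = f.Hf x y + f.Hf x y' := by
  simp only [Hf, f.add_r]
  push_cast
  ring

lemma Hf_rsmul_l (a : ℝ) (x y : V) : f.Hf (a • x) y = (a : ℂ) * f.Hf x y := by
  simp only [Hf, smul_comm Complex.I (a : ℝ) x, f.smul_l]
  push_cast
  ring

lemma Hf_rsmul_r (a : ℝ) (x y : V) : f.Hf x (a • y) = (a : ℂ) * f.Hf x y := by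
  simp only [Hf, f.smul_r]
  push_cast
  ring

lemma Hf_Ismul_l (x y : V) : f.Hf (Complex.I • x) y = Complex.I * f.Hf x y := by
  simp only [Hf, Form.Ismul_Ismul, f.smul_l]
  push_cast
  ring_nf
  rw [Complex.I_sq]
  ring

lemma Hf_smul_l (c : ℂ) (x y : V) : f.Hf (c • x) y = c * f.Hf x y := by
  rw [Form.csmul_decomp c x, f.Hf_add_l, f.Hf_rsmul_l, f.Hf_rsmul_l, f.Hf_Ismul_l]
  rw [show (c.re : ℂ) * f.Hf x y + (c.im : ℂ) * (Complex.I * f.Hf x y)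
      = ((c.re : ℂ) + (c.im : ℂ) * Complex.I) * f.Hf x y by ring, Complex.re_add_im]

section Inv

variable (hinv : ∀ x y : V, f.E (Complex.I • x) (Complex.I • y) = f.E x y)

include hinv

lemma E_Ismul_r (x y : V) : f.E x (Complex.I • y) = - f.E (Complex.I • x) y := by
  have h := hinv (Complex.I • x) y
  rw [Form.Ismul_Ismul] at h
  rw [← hinv x (Complex.I • y), Form.Ismul_Ismul, f.smul_r]
  have h2 := hinv x y
  nlinarith [f.smul_l (-1) x (Complex.I • y)]

lemma Hf_Ismul_r (x y : V) : f.Hf x (Complex.I • y) = - Complex.I * f.Hf x y := by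
  simp only [Hf, hinv, f.E_Ismul_r hinv]
  push_cast
  ring_nf
  rw [Complex.I_sq]
  ring

lemma Hf_smul_r (c : ℂ) (x y : V) :
    f.Hf x (c • y) = (starRingEnd ℂ) c * f.Hf x y := by
  rw [Form.csmul_decomp c y, f.Hf_add_r, f.Hf_rsmul_r, f.Hf_rsmul_r, f.Hf_Ismul_r hinv]
  rw [show (c.re : ℂ) * f.Hf x y + (c.im : ℂ) * (-Complex.I * f.Hf x y)
      = ((c.re : ℂ) - (c.im : ℂ) * Complex.I) * f.Hf x y by ring]
  congr 1
  simp [Complex.ext_iff]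

lemma Hf_conj (x y : V) : f.Hf y x = (starRingEnd ℂ) (f.Hf x y) := by
  have key : f.E (Complex.I • y) x = f.E (Complex.I • x) y := by
    have h := hinv (Complex.I • y) x
    rw [Form.Ismul_Ismul, f.smul_l] at h
    rw [← h, f.antisymm y (Complex.I • x)]
    ring
  simp only [Hf, key, f.antisymm y x]
  simp [Complex.ext_iff]

lemma Hf_expand (x y : V) :
    f.Hf x y = x 0 * (starRingEnd ℂ) (y 0) * f.Hf (ev 0) (ev 0)
      + x 0 * (starRingEnd ℂ) (y 1) * f.Hf (ev 0) (ev 1)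
      + x 1 * (starRingEnd ℂ) (y 0) * f.Hf (ev 1) (ev 0)
      + x 1 * (starRingEnd ℂ) (y 1) * f.Hf (ev 1) (ev 1) := by
  conv_lhs => rw [Form.vec_expand x, Form.vec_expand y]
  simp only [f.Hf_add_l, f.Hf_add_r, f.Hf_smul_l, f.Hf_smul_r hinv]
  ring


/-- the matrix of the hermitian form -/
def Mf : Matrix (Fin 2) (Fin 2) ℂ := Matrix.of fun j k => f.Hf (ev j) (ev k)

omit hinv in
lemma Hf_self (z : V) : f.Hf z z = ((f.E (Complex.I • z) z : ℝ) : ℂ) := by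
  simp [Hf, f.alt]

lemma dot_eq (x y : V) : x ⬝ᵥ (f.Mf).mulVec (star y) = f.Hf x y := by
  rw [f.Hf_expand hinv]
  simp only [Matrix.mulVec, dotProduct, Fin.sum_univ_two, Mf, Matrix.of_apply,
    Pi.star_apply, Complex.star_def]
  ring

lemma im_dot (x y : V) : (x ⬝ᵥ (f.Mf).mulVec (star y)).im = f.E x y := by
  rw [f.dot_eq hinv]
  simp [Hf]

lemma herm : (f.Mf).IsHermitian := by
  unfold Matrix.IsHermitian
  ext j k
  simp only [Mf, Matrix.conjTranspose_apply, Matrix.of_apply]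
  rw [Complex.star_def, ← f.Hf_conj hinv]

/-- entries -/
def aa : ℝ := f.E (Complex.I • ev 0) (ev 0)
def cc : ℝ := f.E (Complex.I • ev 1) (ev 1)
def pp : ℝ := f.E (Complex.I • ev 0) (ev 1)
def qq : ℝ := f.E (ev 0) (ev 1)
def dd : ℝ := f.aa * f.cc - f.pp ^ 2 - f.qq ^ 2

omit hinv in
lemma Hf_e00 : f.Hf (ev 0) (ev 0) = (f.aa : ℂ) := by simp [Hf, f.alt, aa]
omit hinv in
lemma Hf_e11 : f.Hf (ev 1) (ev 1) = (f.cc : ℂ) := by simp [Hf, f.alt, cc]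
omit hinv in
lemma Hf_e01 : f.Hf (ev 0) (ev 1) = (f.pp : ℝ) + (f.qq : ℝ) * Complex.I := rfl
lemma Hf_e10 : f.Hf (ev 1) (ev 0) = (starRingEnd ℂ) (f.Hf (ev 0) (ev 1)) :=
  f.Hf_conj hinv _ _

lemma normSq_beta : Complex.normSq (f.Hf (ev 0) (ev 1)) = f.pp ^ 2 + f.qq ^ 2 := by
  rw [f.Hf_e01]
  rw [Complex.normSq_add_mul_I]

lemma Q_eq (z : V) :
    f.aa * f.E (Complex.I • z) z
      = Complex.normSq ((f.aa : ℂ) * z 0 + (starRingEnd ℂ) (f.Hf (ev 0) (ev 1)) * z 1)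
        + f.dd * Complex.normSq (z 1) := by
  set β := f.Hf (ev 0) (ev 1) with hβ
  have hid : (f.aa : ℂ) * f.Hf z z
      = ((f.aa : ℂ) * z 0 + (starRingEnd ℂ) β * z 1)
          * (starRingEnd ℂ) ((f.aa : ℂ) * z 0 + (starRingEnd ℂ) β * z 1)
        + (((f.aa : ℂ) * (f.cc : ℂ)) - β * (starRingEnd ℂ) β) * (z 1 * (starRingEnd ℂ) (z 1)) := by
    rw [f.Hf_expand hinv z z, ← hβ, f.Hf_e00, f.Hf_e11, f.Hf_e10 hinv, ← hβ]
    simp only [map_add, _root_.map_mul, Complex.conj_conj, Complex.conj_ofReal]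
    ring
  rw [f.Hf_self] at hid
  simp only [Complex.mul_conj] at hid
  have hre : f.aa * f.E (Complex.I • z) z
      = Complex.normSq ((f.aa : ℂ) * z 0 + (starRingEnd ℂ) β * z 1)
        + (f.aa * f.cc - Complex.normSq β) * Complex.normSq (z 1) := by
    exact_mod_cast hid
  rw [f.normSq_beta hinv] at hre
  unfold dd
  linarith

lemma posDef (h1 : 0 < f.aa) (h2 : 0 < f.dd) : (f.Mf).PosDef := by
  refine Matrix.posDef_iff_dotProduct_mulVec.2 ⟨f.herm hinv, fun x hx => ?_⟩
  have hz : star x ≠ 0 := by simpa using hx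
  set z : V := star x with hzdef
  have hdot : star x ⬝ᵥ (f.Mf).mulVec x = f.Hf z z := by
    rw [← f.dot_eq hinv z z]
    simp [hzdef]
  rw [hdot, f.Hf_self]
  rw [Complex.zero_lt_real]
  have hq := f.Q_eq hinv z
  have hw0 : (0:ℝ) ≤ Complex.normSq ((f.aa : ℂ) * z 0
      + (starRingEnd ℂ) (f.Hf (ev 0) (ev 1)) * z 1) := Complex.normSq_nonneg _
  rcases eq_or_ne (z 1) 0 with h|h
  · have hz0 : z 0 ≠ 0 := by
      intro h0
      apply hz
      funext i
      fin_cases i <;> simp_all [hzdef]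
    have hwpos : 0 < Complex.normSq ((f.aa : ℂ) * z 0) :=
      Complex.normSq_pos.2 (mul_ne_zero (by exact_mod_cast h1.ne') hz0)
    rw [h] at hq
    simp only [Complex.normSq_zero, mul_zero, add_zero] at hq
    nlinarith
  · have hzpos := Complex.normSq_pos.2 h
    nlinarith

lemma crit_of_pos (hpos : ∀ z : V, z ≠ 0 → 0 < f.E (Complex.I • z) z) :
    0 < f.aa ∧ 0 < f.dd := by
  have h1 : 0 < f.aa := hpos (ev 0) (ev_ne_zero 0)
  refine ⟨h1, ?_⟩
  set β := f.Hf (ev 0) (ev 1) with hβ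
  set z : V := ![-(starRingEnd ℂ) β, (f.aa : ℂ)] with hzdef
  have hz1 : z 1 = (f.aa : ℂ) := rfl
  have hz0 : z 0 = -(starRingEnd ℂ) β := rfl
  have hzne : z ≠ 0 := by
    intro h
    have := congrFun h 1
    rw [hz1] at this
    simp at this
    exact h1.ne' (by exact_mod_cast this)
  have hq := f.Q_eq hinv z
  rw [← hβ, hz0, hz1] at hq
  have hw : (f.aa : ℂ) * (-(starRingEnd ℂ) β) + (starRingEnd ℂ) β * (f.aa : ℂ) = 0 := by ring
  rw [hw] at hq
  have hQ := hpos z hzne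
  have hns : Complex.normSq ((f.aa : ℂ)) = f.aa ^ 2 := by
    simp [Complex.normSq_ofReal]
    ring
  rw [Complex.normSq_zero, hns] at hq
  nlinarith

end Inv

end Form

lemma real_smul_eq (r : ℝ) (u : V) : ((r : ℂ)) • u = r • u := by
  funext i
  simp [Complex.real_smul]

/-- Nonscalar `D` with `D * D = s² • 1` forces `I`-invariance of any compatible
alternating form. -/
lemma Form.inv_of_compat (f : Form) (D : Matrix (Fin 2) (Fin 2) ℂ) (s : ℝ) (hs : s ≠ 0)
    (hD2 : D * D = ((s : ℂ) ^ 2) • (1 : Matrix (Fin 2) (Fin 2) ℂ))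
    (hDns : ¬ ∃ c : ℂ, D = c • (1 : Matrix (Fin 2) (Fin 2) ℂ))
    (compat : ∀ x y : V, f.E (D.mulVec x) y = f.E x (D.mulVec y)) :
    ∀ x y : V, f.E (Complex.I • x) (Complex.I • y) = f.E x y := by
  have hcard : Fintype.card (Fin 2) = Module.finrank ℂ V := by
    simp [Module.finrank_fintype_fun_eq_card]
  -- any two eigenvectors for the same eigenvalue are dependent
  have dep : ∀ (t : ℂ) (u v : V), D.mulVec u = t • u → D.mulVec v = t • v →
      u = 0 ∨ ∃ c : ℂ, v = c • u := by
    intro t u v hu hv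
    by_contra hcon
    push_neg at hcon
    obtain ⟨hu0, hv0⟩ := hcon
    have hli : LinearIndependent ℂ ![v, u] := by
      rw [linearIndependent_fin2]
      refine ⟨by simpa using hu0, fun a => ?_⟩
      simpa using fun h => (hv0 a h.symm).elim
    let C := basisOfLinearIndependentOfCardEqFinrank hli hcard
    have hC : ∀ i, D.mulVec (C i) = t • C i := by
      intro i
      have hco : ∀ j, C j = ![v, u] j := fun j =>
        congrFun (coe_basisOfLinearIndependentOfCardEqFinrank hli hcard) j
      fin_cases i <;> rw [hco]
      exacts [hv, hu]
    have hall : ∀ z : V, D.mulVec z = t • z := by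
      intro z
      have hz := C.sum_repr z
      rw [Fin.sum_univ_two] at hz
      calc D.mulVec z = D.mulVec (C.repr z 0 • C 0 + C.repr z 1 • C 1) := by rw [hz]
        _ = C.repr z 0 • D.mulVec (C 0) + C.repr z 1 • D.mulVec (C 1) := by
            rw [Matrix.mulVec_add, Matrix.mulVec_smul, Matrix.mulVec_smul]
        _ = t • z := by
            rw [hC 0, hC 1, smul_comm _ t, smul_comm _ t, ← smul_add, hz]
    refine hDns ⟨t, ?_⟩
    ext i j
    have h1 := congrFun (hall (Pi.single j 1)) i
    rw [Matrix.mulVec_single] at h1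
    simpa [Matrix.one_apply, Pi.single_apply, mul_comm] using h1
  -- cross terms vanish
  have cross : ∀ u w : V, D.mulVec u = (s : ℂ) • u → D.mulVec w = ((-s : ℝ) : ℂ) • w →
      f.E u w = 0 := by
    intro u w hu hw
    have h := compat u w
    rw [hu, hw, real_smul_eq, real_smul_eq, f.smul_l, f.smul_r] at h
    have h2 : s * (2 * f.E u w) = 0 := by linarith
    rcases mul_eq_zero.1 h2 with h3 | h3
    · exact absurd h3 hs
    · linarith
  -- same eigenvalue: I-invariance
  have same : ∀ (t : ℂ) (u v : V), D.mulVec u = t • u → D.mulVec v = t • v →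
      f.E (Complex.I • u) (Complex.I • v) = f.E u v := by
    intro t u v hu hv
    rcases dep t u v hu hv with rfl | ⟨c, rfl⟩
    · simp only [smul_zero, f.zero_l]
    · rw [smul_comm Complex.I c u, Form.csmul_decomp c (Complex.I • u),
        Form.csmul_decomp c u, f.add_r, f.add_r, f.smul_r, f.smul_r, f.smul_r, f.smul_r,
        Form.Ismul_Ismul, f.smul_r, f.alt, f.alt, f.antisymm u (Complex.I • u)]
      ring
  -- projections
  intro x y
  set σ : ℂ := (s : ℂ) with hσdef
  have hσ : σ ≠ 0 := by simpa [hσdef] using hs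
  have h2σ : (2 : ℂ) * σ ≠ 0 := mul_ne_zero two_ne_zero hσ
  set Pp : Matrix (Fin 2) (Fin 2) ℂ := ((2 : ℂ) * σ)⁻¹ • (D + σ • 1) with hPp
  set Pm : Matrix (Fin 2) (Fin 2) ℂ := ((2 : ℂ) * σ)⁻¹ • (σ • 1 - D) with hPm
  have hsum : Pp + Pm = 1 := by
    rw [hPp, hPm, ← smul_add]
    have : D + σ • 1 + (σ • 1 - D) = ((2 : ℂ) * σ) • (1 : Matrix (Fin 2) (Fin 2) ℂ) := by
      rw [two_mul, add_smul]
      abel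
    rw [this, smul_smul, inv_mul_cancel₀ h2σ, one_smul]
  have hDPp : D * Pp = σ • Pp := by
    rw [hPp, Matrix.mul_smul, smul_comm]
    congr 1
    rw [mul_add, Matrix.mul_smul, Matrix.mul_one, hD2]
    module
  have hDPm : D * Pm = (-σ) • Pm := by
    rw [hPm, Matrix.mul_smul, smul_comm]
    congr 1
    rw [mul_sub, Matrix.mul_smul, Matrix.mul_one, hD2]
    module
  have heigp : ∀ z : V, D.mulVec (Pp.mulVec z) = σ • Pp.mulVec z := by
    intro z
    rw [Matrix.mulVec_mulVec, hDPp, Matrix.smul_mulVec]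
  have heigm : ∀ z : V, D.mulVec (Pm.mulVec z) = (-σ) • Pm.mulVec z := by
    intro z
    rw [Matrix.mulVec_mulVec, hDPm, Matrix.smul_mulVec]
  have hdec : ∀ z : V, Pp.mulVec z + Pm.mulVec z = z := by
    intro z
    rw [← Matrix.add_mulVec, hsum, Matrix.one_mulVec]
  -- eigen equations for I-multiplied vectors
  have heigpI : ∀ z : V, D.mulVec (Complex.I • z) = σ • (Complex.I • z) →
      True := fun _ _ => trivial
  have hIeig : ∀ (t : ℂ) (u : V), D.mulVec u = t • u →
      D.mulVec (Complex.I • u) = t • (Complex.I • u) := by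
    intro t u hu
    rw [Matrix.mulVec_smul, hu, smul_comm]
  have hcross' : ∀ u w : V, D.mulVec u = σ • u → D.mulVec w = (-σ) • w → f.E u w = 0 := by
    intro u w hu hw
    refine cross u w (by simpa [hσdef] using hu) ?_
    rw [hw]
    congr 1
    simp [hσdef]
  set xp := Pp.mulVec x
  set xm := Pm.mulVec x
  set yp := Pp.mulVec y
  set ym := Pm.mulVec y
  have hx : x = xp + xm := (hdec x).symm
  have hy : y = yp + ym := (hdec y).symm
  have expand : ∀ u₁ u₂ w₁ w₂ : V,
      f.E (u₁ + u₂) (w₁ + w₂) = f.E u₁ w₁ + f.E u₁ w₂ + f.E u₂ w₁ + f.E u₂ w₂ := by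
    intro u₁ u₂ w₁ w₂
    rw [f.add_l, f.add_r, f.add_r]
    ring
  have lhs : f.E (Complex.I • x) (Complex.I • y)
      = f.E (Complex.I • xp) (Complex.I • yp) + f.E (Complex.I • xp) (Complex.I • ym)
        + f.E (Complex.I • xm) (Complex.I • yp) + f.E (Complex.I • xm) (Complex.I • ym) := by
    rw [hx, hy, smul_add, smul_add, expand]
  have rhs : f.E x y = f.E xp yp + f.E xp ym + f.E xm yp + f.E xm ym := by
    rw [hx, hy] ; rw [← hx, ← hy, hx, hy, expand]
  rw [lhs, rhs]
  rw [same σ xp yp (heigp x) (heigp y), same (-σ) xm ym (heigm x) (heigm y)]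
  have c1 : f.E (Complex.I • xp) (Complex.I • ym) = 0 :=
    hcross' _ _ (hIeig σ xp (heigp x)) (hIeig (-σ) ym (heigm y))
  have c2 : f.E (Complex.I • xm) (Complex.I • yp) = 0 := by
    rw [f.antisymm]
    rw [hcross' _ _ (hIeig σ yp (heigp y)) (hIeig (-σ) xm (heigm x))]
    ring
  have c3 : f.E xp ym = 0 := hcross' _ _ (heigp x) (heigm y)
  have c4 : f.E xm yp = 0 := by
    rw [f.antisymm, hcross' _ _ (heigp y) (heigm x)]
    ring
  rw [c1, c2, c3, c4]

section Estar

variable (D : Matrix (Fin 2) (Fin 2) ℂ)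

/-- sesquilinear-imaginary-part form attached to a matrix `N` -/
noncomputable def gform (N : Matrix (Fin 2) (Fin 2) ℂ) (x y : V) : ℝ :=
  - (∑ i, (starRingEnd ℂ) ((N.mulVec x) i) * (N.mulVec y) i).im

lemma gform_add_l (N : Matrix (Fin 2) (Fin 2) ℂ) (x x' y : V) :
    gform N (x + x') y = gform N x y + gform N x' y := by
  simp only [gform, Matrix.mulVec_add, Pi.add_apply, map_add, add_mul,
    Finset.sum_add_distrib, Complex.add_im]
  ring

lemma gform_add_r (N : Matrix (Fin 2) (Fin 2) ℂ) (x y y' : V) :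
    gform N x (y + y') = gform N x y + gform N x y' := by
  simp only [gform, Matrix.mulVec_add, Pi.add_apply, mul_add,
    Finset.sum_add_distrib, Complex.add_im]
  ring

lemma conj_I_mul_self (a : ℂ) :
    (starRingEnd ℂ) (Complex.I * a) * a = -Complex.I * ((Complex.normSq a : ℝ) : ℂ) := by
  rw [_root_.map_mul, Complex.conj_I, mul_assoc, mul_comm ((starRingEnd ℂ) a) a,
    Complex.mul_conj]

lemma gform_smul_l (N : Matrix (Fin 2) (Fin 2) ℂ) (r : ℝ) (x y : V) :
    gform N (r • x) y = r * gform N x y := by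
  have h : ∀ i, (starRingEnd ℂ) ((r • N.mulVec x) i) * ((N.mulVec y) i)
      = (r : ℂ) * ((starRingEnd ℂ) ((N.mulVec x) i) * (N.mulVec y) i) := by
    intro i
    simp only [Pi.smul_apply, Complex.real_smul, _root_.map_mul, Complex.conj_ofReal]
    ring
  simp only [gform, Matrix.mulVec_smul, h, ← Finset.mul_sum]
  simp [Complex.mul_im]
  ring

lemma gform_smul_r (N : Matrix (Fin 2) (Fin 2) ℂ) (r : ℝ) (x y : V) :
    gform N x (r • y) = r * gform N x y := by
  have h : ∀ i, (starRingEnd ℂ) ((N.mulVec x) i) * ((r • N.mulVec y) i)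
      = (r : ℂ) * ((starRingEnd ℂ) ((N.mulVec x) i) * (N.mulVec y) i) := by
    intro i
    simp only [Pi.smul_apply, Complex.real_smul]
    ring
  simp only [gform, Matrix.mulVec_smul, h, ← Finset.mul_sum]
  simp [Complex.mul_im]
  ring

lemma gform_alt (N : Matrix (Fin 2) (Fin 2) ℂ) (x : V) : gform N x x = 0 := by
  have h : ∀ i, (starRingEnd ℂ) ((N.mulVec x) i) * (N.mulVec x) i
      = ((Complex.normSq ((N.mulVec x) i) : ℝ) : ℂ) := by
    intro i
    rw [mul_comm, Complex.mul_conj]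
  simp only [gform, h, ← Complex.ofReal_sum, Complex.ofReal_im, neg_zero]

lemma gform_inv (N : Matrix (Fin 2) (Fin 2) ℂ) (x y : V) :
    gform N (Complex.I • x) (Complex.I • y) = gform N x y := by
  have h : ∀ i, (starRingEnd ℂ) ((Complex.I • N.mulVec x) i) * ((Complex.I • N.mulVec y) i)
      = (starRingEnd ℂ) ((N.mulVec x) i) * (N.mulVec y) i := by
    intro i
    simp only [Pi.smul_apply, smul_eq_mul, _root_.map_mul, Complex.conj_I]
    ring_nf
    rw [Complex.I_sq]
    ring
  simp only [gform, Matrix.mulVec_smul, h]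

lemma gform_Iz (N : Matrix (Fin 2) (Fin 2) ℂ) (z : V) :
    gform N (Complex.I • z) z = ∑ i, Complex.normSq ((N.mulVec z) i) := by
  have h : ∀ i, (starRingEnd ℂ) ((Complex.I • N.mulVec z) i) * ((N.mulVec z) i)
      = -Complex.I * ((Complex.normSq ((N.mulVec z) i) : ℝ) : ℂ) := by
    intro i
    simp only [Pi.smul_apply, smul_eq_mul]
    exact conj_I_mul_self _
  simp only [gform, Matrix.mulVec_smul, h, ← Finset.mul_sum, ← Complex.ofReal_sum]
  simp

lemma gform_scale (N : Matrix (Fin 2) (Fin 2) ℂ) (c : ℝ) (h : N * D = (c : ℂ) • N) (x y : V) :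
    gform N (D.mulVec x) (D.mulVec y) = c ^ 2 * gform N x y := by
  have hm : ∀ z : V, N.mulVec (D.mulVec z) = (c : ℂ) • N.mulVec z := by
    intro z
    rw [Matrix.mulVec_mulVec, h, Matrix.smul_mulVec]
  have h2 : ∀ i, (starRingEnd ℂ) (((c : ℂ) • N.mulVec x) i) * (((c : ℂ) • N.mulVec y) i)
      = ((c ^ 2 : ℝ) : ℂ) * ((starRingEnd ℂ) ((N.mulVec x) i) * (N.mulVec y) i) := by
    intro i
    simp only [Pi.smul_apply, smul_eq_mul, _root_.map_mul, Complex.conj_ofReal]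
    push_cast
    ring
  simp only [gform, hm, h2, ← Finset.mul_sum]
  simp [Complex.mul_im, ← Complex.ofReal_pow]
  ring

end Estar

namespace Form

variable (f : Form)

lemma sum_l {ι : Type*} (s : Finset ι) (g : ι → V) (y : V) :
    f.E (∑ i ∈ s, g i) y = ∑ i ∈ s, f.E (g i) y := by
  classical
  induction s using Finset.induction_on with
  | empty => simp [f.zero_l]
  | insert _ _ h ih => rw [Finset.sum_insert h, Finset.sum_insert h, f.add_l, ih]

lemma sum_r {ι : Type*} (s : Finset ι) (g : ι → V) (x : V) :
    f.E x (∑ i ∈ s, g i) = ∑ i ∈ s, f.E x (g i) := by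
  classical
  induction s using Finset.induction_on with
  | empty => simp [f.zero_r]
  | insert _ _ h ih => rw [Finset.sum_insert h, Finset.sum_insert h, f.add_r, ih]

lemma expand (B : Module.Basis (Fin 4) ℝ V) (x y : V) :
    f.E x y = ∑ a, ∑ c, (B.repr x a) * (B.repr y c) * f.E (B a) (B c) := by
  conv_lhs => rw [← B.sum_repr x]
  rw [f.sum_l]
  refine Finset.sum_congr rfl fun a _ => ?_
  conv_lhs => rw [← B.sum_repr y]
  rw [f.smul_l, f.sum_r, Finset.mul_sum]
  refine Finset.sum_congr rfl fun c _ => ?_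
  rw [f.smul_r]
  ring

end Form

section Rational

variable (B : Module.Basis (Fin 4) ℝ V) (D : Matrix (Fin 2) (Fin 2) ℂ) (dR : ℝ)

/-- bilinear form with prescribed (antisymmetrized) coefficients on the basis -/
noncomputable def Fv (w : Fin 4 → Fin 4 → ℝ) (x y : V) : ℝ :=
  ∑ a, ∑ c, (w a c - w c a) * (B.repr x a) * (B.repr y c)

/-- the `D`-symmetrized version -/
noncomputable def Ev (w : Fin 4 → Fin 4 → ℝ) (x y : V) : ℝ :=
  Fv B w x y + dR⁻¹ * Fv B w (D.mulVec x) (D.mulVec y)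

lemma Fv_add_l (w : Fin 4 → Fin 4 → ℝ) (x x' y : V) :
    Fv B w (x + x') y = Fv B w x y + Fv B w x' y := by
  simp only [Fv, map_add, Finsupp.coe_add, Pi.add_apply, ← Finset.sum_add_distrib]
  refine Finset.sum_congr rfl fun a _ => ?_
  refine Finset.sum_congr rfl fun c _ => ?_
  ring

lemma Fv_add_r (w : Fin 4 → Fin 4 → ℝ) (x y y' : V) :
    Fv B w x (y + y') = Fv B w x y + Fv B w x y' := by
  simp only [Fv, map_add, Finsupp.coe_add, Pi.add_apply, ← Finset.sum_add_distrib]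
  refine Finset.sum_congr rfl fun a _ => ?_
  refine Finset.sum_congr rfl fun c _ => ?_
  ring

lemma Fv_smul_l (w : Fin 4 → Fin 4 → ℝ) (r : ℝ) (x y : V) :
    Fv B w (r • x) y = r * Fv B w x y := by
  simp only [Fv, _root_.map_smul, Finsupp.coe_smul, Pi.smul_apply, smul_eq_mul, Finset.mul_sum]
  refine Finset.sum_congr rfl fun a _ => ?_
  refine Finset.sum_congr rfl fun c _ => ?_
  ring

lemma Fv_smul_r (w : Fin 4 → Fin 4 → ℝ) (r : ℝ) (x y : V) :
    Fv B w x (r • y) = r * Fv B w x y := by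
  simp only [Fv, _root_.map_smul, Finsupp.coe_smul, Pi.smul_apply, smul_eq_mul, Finset.mul_sum]
  refine Finset.sum_congr rfl fun a _ => ?_
  refine Finset.sum_congr rfl fun c _ => ?_
  ring

lemma Fv_alt (w : Fin 4 → Fin 4 → ℝ) (x : V) : Fv B w x x = 0 := by
  have h : Fv B w x x = - Fv B w x x := by
    conv_lhs => rw [Fv, Finset.sum_comm]
    rw [Fv, ← Finset.sum_neg_distrib]
    refine Finset.sum_congr rfl fun a _ => ?_
    rw [← Finset.sum_neg_distrib]
    refine Finset.sum_congr rfl fun c _ => ?_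
    ring
  linarith

lemma Fv_basis (w : Fin 4 → Fin 4 → ℝ) (i j : Fin 4) :
    Fv B w (B i) (B j) = w i j - w j i := by
  simp [Fv, Module.Basis.repr_self, Finsupp.single_apply]

lemma Fv_continuous (x y : V) : Continuous fun w : Fin 4 → Fin 4 → ℝ => Fv B w x y := by
  apply continuous_finset_sum
  intro a _
  apply continuous_finset_sum
  intro c _
  fun_prop

lemma Ev_continuous (x y : V) : Continuous fun w : Fin 4 → Fin 4 → ℝ => Ev B D dR w x y :=
  (Fv_continuous B x y).add (continuous_const.mul (Fv_continuous B _ _))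

end Rational

/-- the reference positive form built from the two eigenprojections -/
noncomputable def pairForm (P Q : Matrix (Fin 2) (Fin 2) ℂ) : Form :=
  ⟨fun x y => gform P x y + gform Q x y,
    fun x x' y => by rw [gform_add_l, gform_add_l]; ring,
    fun x y y' => by rw [gform_add_r, gform_add_r]; ring,
    fun r x y => by rw [gform_smul_l, gform_smul_l]; ring,
    fun r x y => by rw [gform_smul_r, gform_smul_r]; ring,
    fun x => by rw [gform_alt, gform_alt]; ring⟩

/-- the rational family of forms as `Form`s -/
noncomputable def EvForm (B : Module.Basis (Fin 4) ℝ V) (D : Matrix (Fin 2) (Fin 2) ℂ) (dR : ℝ)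
    (w : Fin 4 → Fin 4 → ℝ) : Form :=
  ⟨Ev B D dR w,
    fun x x' y => by
      dsimp only [Ev]
      rw [Fv_add_l, Matrix.mulVec_add, Fv_add_l]; ring,
    fun x y y' => by
      dsimp only [Ev]
      rw [Fv_add_r, Matrix.mulVec_add, Fv_add_r]; ring,
    fun r x y => by
      dsimp only [Ev]
      rw [Fv_smul_l, Matrix.mulVec_smul, Fv_smul_l]; ring,
    fun r x y => by
      dsimp only [Ev]
      rw [Fv_smul_r, Matrix.mulVec_smul, Fv_smul_r]; ring,
    fun x => by
      dsimp only [Ev]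
      rw [Fv_alt, Fv_alt]; ring⟩

/-- scaling a form -/
noncomputable def scaleForm (c : ℝ) (f : Form) : Form :=
  ⟨fun x y => c * f.E x y,
    fun x x' y => by rw [f.add_l]; ring,
    fun x y y' => by rw [f.add_r]; ring,
    fun r x y => by rw [f.smul_l]; ring,
    fun r x y => by rw [f.smul_r]; ring,
    fun x => by rw [f.alt]; ring⟩

lemma den_mul_self (q : ℚ) : ((q.den : ℚ)) * q = (q.num : ℚ) := by
  rw [mul_comm]
  nth_rewrite 1 [← Rat.num_div_den q]
  rw [div_mul_cancel₀]
  exact_mod_cast q.den_ne_zero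

end Stmt11

open Stmt11

/-- If a lattice `Λ ⊆ ℂ²` admits multiplication by `√d`, `d > 0`
a nonsquare integer, via a nonscalar `D`, then there is a positive definite
hermitian form `H` with `Im H(Λ,Λ) ⊆ ℤ` and `Im H(Λ, DΛ) ⊆ ℤ`; in particular
the torus `ℂ²/Λ` is algebraic. -/
theorem stmt_11 (d : ℤ) (hd : ¬ ∃ n : ℤ, n ^ 2 = d) (hdpos : 0 < d)
    (b : Fin 4 → (Fin 2 → ℂ)) (hb : LinearIndependent ℝ b)
    (Λ : AddSubgroup (Fin 2 → ℂ)) (hΛ : Λ = AddSubgroup.closure (Set.range b))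
    (D : Matrix (Fin 2) (Fin 2) ℂ)
    (hD2 : D ^ 2 = (d : ℂ) • (1 : Matrix (Fin 2) (Fin 2) ℂ))
    (hDns : ¬ ∃ c : ℂ, D = c • (1 : Matrix (Fin 2) (Fin 2) ℂ))
    (hDΛ : ∀ v ∈ Λ, D.mulVec v ∈ Λ) :
    ∃ M : Matrix (Fin 2) (Fin 2) ℂ, M.PosDef ∧
      (∀ x ∈ Λ, ∀ y ∈ Λ, ∃ k : ℤ, (x ⬝ᵥ M.mulVec (star y)).im = (k : ℝ)) ∧
      (∀ x ∈ Λ, ∀ y ∈ Λ, ∃ k : ℤ,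
        (x ⬝ᵥ M.mulVec (star (D.mulVec y))).im = (k : ℝ)) := by
  classical
  -- real scalar setup
  have hdR : (0:ℝ) < (d:ℝ) := by exact_mod_cast hdpos
  set s : ℝ := Real.sqrt (d:ℝ) with hsdef
  have hs0 : 0 < s := Real.sqrt_pos.2 hdR
  have hs : s ≠ 0 := ne_of_gt hs0
  have hsq : s ^ 2 = (d:ℝ) := Real.sq_sqrt hdR.le
  have hsC : ((s:ℂ)) ^ 2 = (d:ℂ) := by
    rw [← Complex.ofReal_pow, hsq]
    push_cast
    ring
  have hD2' : D * D = ((s:ℂ) ^ 2) • (1 : Matrix (Fin 2) (Fin 2) ℂ) := by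
    rw [← sq, hD2, hsC]
  set σ : ℂ := (s:ℂ) with hσdef
  have hσ : σ ≠ 0 := by simpa [hσdef] using hs
  have h2σ : (2:ℂ) * σ ≠ 0 := mul_ne_zero two_ne_zero hσ
  -- projections onto the eigenspaces of D
  set PP : Matrix (Fin 2) (Fin 2) ℂ := ((2:ℂ)*σ)⁻¹ • (D + σ • 1) with hPP
  set PM : Matrix (Fin 2) (Fin 2) ℂ := ((2:ℂ)*σ)⁻¹ • (σ • 1 - D) with hPM
  have hsumP : PP + PM = 1 := by
    rw [hPP, hPM, ← smul_add]
    have h : D + σ • 1 + (σ • 1 - D) = ((2:ℂ)*σ) • (1 : Matrix (Fin 2) (Fin 2) ℂ) := by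
      rw [two_mul, add_smul]
      abel
    rw [h, smul_smul, inv_mul_cancel₀ h2σ, one_smul]
  have hPPD : PP * D = σ • PP := by
    rw [hPP, Matrix.smul_mul, smul_comm]
    congr 1
    rw [add_mul, Matrix.smul_mul, Matrix.one_mul, hD2']
    module
  have hPMD : PM * D = (-σ) • PM := by
    rw [hPM, Matrix.smul_mul, smul_comm]
    congr 1
    rw [sub_mul, Matrix.smul_mul, Matrix.one_mul, hD2']
    module
  have hPPD' : PP * D = ((s : ℝ) : ℂ) • PP := hPPD
  have hPMD' : PM * D = (((-s : ℝ)) : ℂ) • PM := by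
    have hcast : (((-s : ℝ)) : ℂ) = -σ := by rw [hσdef]; push_cast; ring
    rw [hPMD, hcast]
  -- the positive reference form
  let fstar : Form := pairForm PP PM
  have hinvstar : ∀ x y : V, fstar.E (Complex.I • x) (Complex.I • y) = fstar.E x y := by
    intro x y
    show gform PP _ _ + gform PM _ _ = gform PP x y + gform PM x y
    rw [gform_inv, gform_inv]
  have hposstar : ∀ z : V, z ≠ 0 → 0 < fstar.E (Complex.I • z) z := by
    intro z hz
    show 0 < gform PP (Complex.I • z) z + gform PM (Complex.I • z) z
    rw [gform_Iz, gform_Iz, ← Finset.sum_add_distrib]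
    have hzd : ∀ i, (PP.mulVec z) i + (PM.mulVec z) i = z i := by
      intro i
      have h : (PP + PM).mulVec z = z := by rw [hsumP, Matrix.one_mulVec]
      calc (PP.mulVec z) i + (PM.mulVec z) i = ((PP + PM).mulVec z) i := by
            rw [Matrix.add_mulVec]; rfl
        _ = z i := by rw [h]
    obtain ⟨j, hj⟩ : ∃ j, z j ≠ 0 := Function.ne_iff.1 hz
    refine Finset.sum_pos'
      (fun i _ => add_nonneg (Complex.normSq_nonneg _) (Complex.normSq_nonneg _))
      ⟨j, Finset.mem_univ j, ?_⟩
    by_contra hle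
    push_neg at hle
    have h1 : Complex.normSq ((PP.mulVec z) j) = 0 := by
      nlinarith [Complex.normSq_nonneg ((PP.mulVec z) j), Complex.normSq_nonneg ((PM.mulVec z) j)]
    have h2 : Complex.normSq ((PM.mulVec z) j) = 0 := by
      nlinarith [Complex.normSq_nonneg ((PP.mulVec z) j), Complex.normSq_nonneg ((PM.mulVec z) j)]
    apply hj
    rw [← hzd j, Complex.normSq_eq_zero.1 h1, Complex.normSq_eq_zero.1 h2, add_zero]
  have hscalestar : ∀ x y : V, fstar.E (D.mulVec x) (D.mulVec y) = (d:ℝ) * fstar.E x y := by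
    intro x y
    show gform PP _ _ + gform PM _ _ = (d:ℝ) * (gform PP x y + gform PM x y)
    rw [gform_scale D PP s hPPD', gform_scale D PM (-s) hPMD']
    have hns : (-s) ^ 2 = s ^ 2 := by ring
    rw [hns, hsq]
    ring
  -- basis of the lattice
  have hcard4 : Fintype.card (Fin 4) = Module.finrank ℝ V := by
    rw [Module.finrank_pi_fintype]
    simp [Complex.finrank_real_complex]
  set B : Module.Basis (Fin 4) ℝ V := basisOfLinearIndependentOfCardEqFinrank hb hcard4 with hBdef
  have hBb : ∀ i, B i = b i := fun i =>
    congrFun (coe_basisOfLinearIndependentOfCardEqFinrank hb hcard4) i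
  have hbΛ : ∀ i, b i ∈ Λ := by
    intro i
    rw [hΛ]
    exact AddSubgroup.subset_closure ⟨i, rfl⟩
  -- integrality of coordinates of lattice vectors
  have hint : ∀ x ∈ Λ, ∀ a, ∃ k : ℤ, B.repr x a = (k:ℝ) := by
    intro x hx
    rw [hΛ] at hx
    induction hx using AddSubgroup.closure_induction with
    | mem x hxk =>
        obtain ⟨i, rfl⟩ := hxk
        intro a
        rw [← hBb i]
        refine ⟨if i = a then 1 else 0, ?_⟩
        simp only [Module.Basis.repr_self, Finsupp.single_apply]
        split <;> simp
    | zero => intro a; exact ⟨0, by simp⟩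
    | add u v hu hv ihu ihv =>
        intro a
        obtain ⟨k1, h1⟩ := ihu a
        obtain ⟨k2, h2⟩ := ihv a
        exact ⟨k1 + k2, by rw [map_add, Finsupp.add_apply, h1, h2]; push_cast; ring⟩
    | neg u hu ihu =>
        intro a
        obtain ⟨k, h⟩ := ihu a
        exact ⟨-k, by rw [map_neg, Finsupp.neg_apply, h]; push_cast; ring⟩
  have hκex : ∀ i a, ∃ k : ℤ, B.repr (D.mulVec (b i)) a = (k:ℝ) :=
    fun i => hint _ (hDΛ _ (hbΛ i))
  choose κ hκ using hκex
  -- the rational family of forms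
  let fEv : (Fin 4 → Fin 4 → ℝ) → Form := fun w => EvForm B D (d:ℝ) w
  have hDD : ∀ z : V, D.mulVec (D.mulVec z) = (d:ℝ) • z := by
    intro z
    rw [Matrix.mulVec_mulVec, ← sq, hD2, Matrix.smul_mulVec, Matrix.one_mulVec]
    have h : (d:ℂ) = (((d:ℝ)):ℂ) := by push_cast; ring
    rw [h, real_smul_eq]
  have hcompat : ∀ w (x y : V),
      Ev B D (d:ℝ) w (D.mulVec x) y = Ev B D (d:ℝ) w x (D.mulVec y) := by
    intro w x y
    simp only [Ev]
    rw [hDD x, Fv_smul_l, hDD y, Fv_smul_r]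
    field_simp
    ring
  have hinvEv : ∀ w, ∀ x y : V,
      Ev B D (d:ℝ) w (Complex.I • x) (Complex.I • y) = Ev B D (d:ℝ) w x y := by
    intro w
    exact (fEv w).inv_of_compat D s hs hD2' hDns (hcompat w)
  -- values on the lattice basis
  have hvalEv : ∀ w i j, Ev B D (d:ℝ) w (b i) (b j)
      = (w i j - w j i) + (d:ℝ)⁻¹ * ∑ a, ∑ c, (w a c - w c a) * (κ i a) * (κ j c) := by
    intro w i j
    simp only [Ev]
    congr 1
    · rw [← hBb i, ← hBb j, Fv_basis]
    · congr 1
      simp only [Fv]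
      refine Finset.sum_congr rfl fun a _ => Finset.sum_congr rfl fun c _ => ?_
      rw [hκ i a, hκ j c]
  -- at the reference parameter the form is the positive one
  set wstar : Fin 4 → Fin 4 → ℝ := fun a c => fstar.E (b a) (b c) / 4 with hwstar
  have hEvstar : ∀ x y : V, Ev B D (d:ℝ) wstar x y = fstar.E x y := by
    have hFv : ∀ u v : V, Fv B wstar u v = fstar.E u v / 2 := by
      intro u v
      rw [fstar.expand B u v]
      simp only [Fv, hwstar]
      rw [Finset.sum_div]
      refine Finset.sum_congr rfl fun a _ => ?_
      rw [Finset.sum_div]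
      refine Finset.sum_congr rfl fun c _ => ?_
      rw [hBb a, hBb c, fstar.antisymm (b c) (b a)]
      ring
    intro x y
    simp only [Ev]
    rw [hFv, hFv, hscalestar]
    field_simp
    ring
  have hcrit := fstar.crit_of_pos hinvstar hposstar
  -- the two positivity quantities as functions of the parameter
  set Aw : (Fin 4 → Fin 4 → ℝ) → ℝ :=
    fun w => Ev B D (d:ℝ) w (Complex.I • Form.ev 0) (Form.ev 0) with hAw
  set Cw : (Fin 4 → Fin 4 → ℝ) → ℝ :=
    fun w => Ev B D (d:ℝ) w (Complex.I • Form.ev 1) (Form.ev 1) with hCw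
  set Pw : (Fin 4 → Fin 4 → ℝ) → ℝ :=
    fun w => Ev B D (d:ℝ) w (Complex.I • Form.ev 0) (Form.ev 1) with hPw
  set Qw : (Fin 4 → Fin 4 → ℝ) → ℝ :=
    fun w => Ev B D (d:ℝ) w (Form.ev 0) (Form.ev 1) with hQw
  set S : Set (Fin 4 → Fin 4 → ℝ) :=
    {w | 0 < Aw w ∧ 0 < Aw w * Cw w - Pw w ^ 2 - Qw w ^ 2} with hSdef
  have hSopen : IsOpen S := by
    have hA : Continuous Aw := Ev_continuous B D (d:ℝ) _ _
    have hC : Continuous Cw := Ev_continuous B D (d:ℝ) _ _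
    have hP : Continuous Pw := Ev_continuous B D (d:ℝ) _ _
    have hQ : Continuous Qw := Ev_continuous B D (d:ℝ) _ _
    have : S = Aw ⁻¹' Set.Ioi 0
        ∩ (fun w => Aw w * Cw w - Pw w ^ 2 - Qw w ^ 2) ⁻¹' Set.Ioi 0 := rfl
    rw [this]
    exact (isOpen_Ioi.preimage hA).inter
      (isOpen_Ioi.preimage (((hA.mul hC).sub (hP.pow 2)).sub (hQ.pow 2)))
  have hwstarS : wstar ∈ S := by
    constructor
    · show 0 < Aw wstar
      rw [hAw]
      simp only []
      rw [hEvstar]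
      exact hcrit.1
    · show 0 < Aw wstar * Cw wstar - Pw wstar ^ 2 - Qw wstar ^ 2
      rw [hAw, hCw, hPw, hQw]
      simp only []
      rw [hEvstar, hEvstar, hEvstar, hEvstar]
      exact hcrit.2
  -- pick a rational parameter in S
  obtain ⟨ε, hε0, hball⟩ := Metric.isOpen_iff.1 hSopen wstar hwstarS
  choose qr hqr using fun p : Fin 4 × Fin 4 => exists_rat_near (wstar p.1 p.2) hε0
  set w : Fin 4 → Fin 4 → ℝ := fun a c => ((qr (a, c) : ℚ) : ℝ) with hwdef
  have hwS : w ∈ S := by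
    apply hball
    rw [Metric.mem_ball, dist_pi_lt_iff hε0]
    intro a
    rw [dist_pi_lt_iff hε0]
    intro c
    rw [Real.dist_eq]
    have := hqr (a, c)
    rw [abs_sub_comm] at this
    exact this
  -- rational values with common denominator
  set εq : Fin 4 → Fin 4 → ℚ := fun i j => (qr (i, j) - qr (j, i))
    + (d:ℚ)⁻¹ * ∑ a, ∑ c, (qr (a, c) - qr (c, a)) * (κ i a) * (κ j c) with hεq
  have hvalq : ∀ i j, Ev B D (d:ℝ) w (b i) (b j) = ((εq i j : ℚ) : ℝ) := by
    intro i j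
    rw [hvalEv w i j, hεq]
    push_cast
    ring
  set N : ℕ := ∏ i, ∏ j, (εq i j).den with hNdef
  have hN0 : 0 < N := Finset.prod_pos fun i _ => Finset.prod_pos fun j _ => (εq i j).pos
  have hNR : (0:ℝ) < (N:ℝ) := by exact_mod_cast hN0
  have hNden : ∀ i j, ∃ m : ℤ, ((N:ℚ)) * εq i j = (m:ℚ) := by
    intro i j
    have hdvd : (εq i j).den ∣ N := by
      refine dvd_trans
        (Finset.dvd_prod_of_mem (fun j' => (εq i j').den) (Finset.mem_univ j)) ?_
      exact Finset.dvd_prod_of_mem (fun i' => ∏ j', (εq i' j').den) (Finset.mem_univ i)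
    obtain ⟨t, ht⟩ := hdvd
    refine ⟨t * (εq i j).num, ?_⟩
    have hden : (((εq i j).den : ℚ)) * εq i j = ((εq i j).num : ℚ) := den_mul_self _
    calc ((N:ℚ)) * εq i j = ((t:ℚ)) * ((((εq i j).den : ℚ)) * εq i j) := by
          rw [ht]; push_cast; ring
      _ = ((t * (εq i j).num : ℤ) : ℚ) := by rw [hden]; push_cast; ring
  choose mm hmm using hNden
  -- the final form
  set f0 : Form := fEv w with hf0
  let ffin : Form := scaleForm (N:ℝ) f0
  have hinvfin : ∀ x y : V, ffin.E (Complex.I • x) (Complex.I • y) = ffin.E x y := by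
    intro x y
    show (N:ℝ) * f0.E _ _ = (N:ℝ) * f0.E x y
    have : f0.E (Complex.I • x) (Complex.I • y) = f0.E x y := hinvEv w x y
    rw [this]
  have h1 : 0 < ffin.aa := by
    show 0 < (N:ℝ) * f0.E _ _
    exact mul_pos hNR hwS.1
  have h2 : 0 < ffin.dd := by
    show 0 < (N:ℝ) * f0.E _ _ * ((N:ℝ) * f0.E _ _) - ((N:ℝ) * f0.E _ _) ^ 2
      - ((N:ℝ) * f0.E _ _) ^ 2
    have hrw : (N:ℝ) * Aw w * ((N:ℝ) * Cw w) - ((N:ℝ) * Pw w) ^ 2 - ((N:ℝ) * Qw w) ^ 2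
        = (N:ℝ) ^ 2 * (Aw w * Cw w - Pw w ^ 2 - Qw w ^ 2) := by ring
    show 0 < (N:ℝ) * Aw w * ((N:ℝ) * Cw w) - ((N:ℝ) * Pw w) ^ 2 - ((N:ℝ) * Qw w) ^ 2
    rw [hrw]
    exact mul_pos (pow_pos hNR 2) hwS.2
  have hpd := ffin.posDef hinvfin h1 h2
  -- integrality on the lattice
  have main : ∀ x ∈ Λ, ∀ y ∈ Λ, ∃ k : ℤ, (x ⬝ᵥ (ffin.Mf).mulVec (star y)).im = (k:ℝ) := by
    intro x hx y hy
    choose X hX using hint x hx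
    choose Y hY using hint y hy
    refine ⟨∑ a, ∑ c, X a * Y c * mm a c, ?_⟩
    rw [ffin.im_dot hinvfin]
    show (N:ℝ) * f0.E x y = _
    rw [f0.expand B x y]
    push_cast
    rw [Finset.mul_sum]
    refine Finset.sum_congr rfl fun a _ => ?_
    rw [Finset.mul_sum]
    refine Finset.sum_congr rfl fun c _ => ?_
    rw [hX a, hY c]
    have hfB : f0.E (B a) (B c) = ((εq a c : ℚ) : ℝ) := by
      show Ev B D (d:ℝ) w (B a) (B c) = _
      rw [hBb a, hBb c]
      exact hvalq a c
    rw [hfB]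
    have hmc : ((mm a c : ℤ) : ℝ) = (N:ℝ) * ((εq a c : ℚ) : ℝ) := by
      have := hmm a c
      have h2 : (((N:ℚ) * εq a c : ℚ) : ℝ) = ((mm a c : ℤ) : ℝ) := by
        rw [this]
        norm_cast
      push_cast at h2
      linarith
    rw [hmc]
    ring
  exact ⟨ffin.Mf, hpd, main, fun x hx y hy => main x hx _ (hDΛ y hy)⟩
end

section
/- Let Λ ⊆ ℂ² be a lattice, D nonscalar with D² = d·I, d < 0 a nonsquare integer (so d ≤ -1), and DΛ ⊆ Λ. Then no hermitian form H in N_D = {H ∈ NS(ℂ²/Λ) : H(·,D·) ∈ NS(ℂ²/Λ)} is positive definite. -/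
open Matrix Complex
open scoped ComplexOrder

/-- `H ∈ NS(ℂ²/Λ)`: hermitian with `Im H(Λ,Λ) ⊆ ℤ`. -/
def inNS (Λ : AddSubgroup (Fin 2 → ℂ)) (M : Matrix (Fin 2) (Fin 2) ℂ) : Prop :=
  M.IsHermitian ∧ ∀ x ∈ Λ, ∀ y ∈ Λ, ∃ k : ℤ, (x ⬝ᵥ M.mulVec (star y)).im = (k : ℝ)

/-- `N_D = {H ∈ NS : H(·,D·) ∈ NS}`. -/
def ND (Λ : AddSubgroup (Fin 2 → ℂ)) (D : Matrix (Fin 2) (Fin 2) ℂ) :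
    Set (Matrix (Fin 2) (Fin 2) ℂ) :=
  {M | inNS Λ M ∧ inNS Λ (M * D.map (starRingEnd ℂ))}

/-! With `C = D.map conj`, hermitianity of both `M` and `M * C` gives
`Cᴴ * M * C = (M * C)ᴴ * C = M * C²`, which is `d • M` since `C² = d • 1`. Evaluating on any
`x ≠ 0` then makes `d` times a positive number nonnegative, impossible for `d < 0`. -/

namespace Matrix

variable {n R : Type*} [Fintype n] [CommRing R] [StarRing R]

theorem conjTranspose_mul_mul_eq_smul_of_isHermitian [DecidableEq n] {M C : Matrix n n R} {c : R}
    (hM : M.IsHermitian) (hMC : (M * C).IsHermitian) (hC : C * C = c • 1) :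
    Cᴴ * M * C = c • M := by
  calc Cᴴ * M * C = (M * C)ᴴ * C := by rw [conjTranspose_mul, hM.eq]
    _ = M * (C * C) := by rw [hMC.eq, mul_assoc]
    _ = c • M := by rw [hC, mul_smul_comm, mul_one]

theorem PosDef.not_lt_zero_of_conjTranspose_mul_mul_eq_smul [PartialOrder R]
    [MulPosStrictMono R] [Nontrivial R] [Nonempty n] {M C : Matrix n n R} {c : R}
    (hM : M.PosDef) (h : Cᴴ * M * C = c • M) : ¬ c < 0 := by
  intro hc
  set x : n → R := fun _ => 1
  have hx : x ≠ 0 := Function.ne_iff.mpr ⟨Classical.arbitrary n, one_ne_zero⟩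
  have hCx : star (C *ᵥ x) ⬝ᵥ M *ᵥ (C *ᵥ x) = c * (star x ⬝ᵥ M *ᵥ x) := by
    rw [star_mulVec, mulVec_mulVec, dotProduct_mulVec, vecMul_vecMul, ← dotProduct_mulVec,
      ← mul_assoc, h, smul_mulVec, dotProduct_smul, smul_eq_mul]
  have hnonneg := hM.posSemidef.dotProduct_mulVec_nonneg (C *ᵥ x)
  rw [hCx] at hnonneg
  exact (mul_neg_of_neg_of_pos hc (hM.dotProduct_mulVec_pos hx)).not_ge hnonneg

end Matrix

theorem stmt_12_general (d : ℤ) (hdneg : d < 0)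
    (Λ : AddSubgroup (Fin 2 → ℂ))
    (D : Matrix (Fin 2) (Fin 2) ℂ)
    (hD2 : D ^ 2 = (d : ℂ) • (1 : Matrix (Fin 2) (Fin 2) ℂ)) :
    ∀ M ∈ ND Λ D, ¬ M.PosDef := by
  rintro M ⟨⟨hM, -⟩, ⟨hMC, -⟩⟩ hpos
  have hC : D.map (starRingEnd ℂ) * D.map (starRingEnd ℂ) = (d : ℂ) • 1 := by
    rw [← sq, ← Matrix.map_pow, hD2]
    ext i j
    simp [one_apply, apply_ite (starRingEnd ℂ)]
  exact hpos.not_lt_zero_of_conjTranspose_mul_mul_eq_smul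
    (conjTranspose_mul_mul_eq_smul_of_isHermitian hM hMC hC) (by exact_mod_cast hdneg)

/-- for `d < 0` a nonsquare integer, no form in `N_D` is
positive definite. -/
theorem stmt_12 (d : ℤ) (hd : ¬ ∃ n : ℤ, n ^ 2 = d) (hdneg : d < 0)
    (b : Fin 4 → (Fin 2 → ℂ)) (hb : LinearIndependent ℝ b)
    (Λ : AddSubgroup (Fin 2 → ℂ)) (hΛ : Λ = AddSubgroup.closure (Set.range b))
    (D : Matrix (Fin 2) (Fin 2) ℂ)
    (hD2 : D ^ 2 = (d : ℂ) • (1 : Matrix (Fin 2) (Fin 2) ℂ))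
    (hDns : ¬ ∃ c : ℂ, D = c • (1 : Matrix (Fin 2) (Fin 2) ℂ))
    (hDΛ : ∀ v ∈ Λ, D.mulVec v ∈ Λ) :
    ∀ M ∈ ND Λ D, ¬ M.PosDef :=
  stmt_12_general d hdneg Λ D hD2
end

section
/- Let m ∈ ℕ, m ≥ 1, and r ∈ ℝ such that 1, r√m, r² are linearly independent over ℚ. Let Λ ⊆ ℂ² be the lattice spanned over ℤ by the columns of the matrix [[1, 1+ri, √(-m), √(-m)(1+ri)],[1, ri, -√(-m), -√(-m)ri]] where √(-m) = i√m. Then the ring of matrices T ∈ M₂(ℂ) with TΛ ⊆ Λ equals { diag(n₁+n₂√(-m), n₁-n₂√(-m)) : n₁, n₂ ∈ ℤ }, which is isomorphic to ℤ[√(-m)]. -/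
/-!
Put `ω = r i` and let `ℤ[√-m]` act on `ℂ²` through `x ↦ diag(x, x̄)`, with `√-m ↦ i√m`. Then
`Λ = {(x + y(1 + ω), x̄ + ȳω) : x, y ∈ ℤ[√-m]}` is a `ℤ[√-m]`-module, so every `diag(x, x̄)`
preserves it. Conversely, the independence of `1, r√m, r²` over `ℚ` makes `1, ω, ω²`
independent over `ℤ[√-m]`. If `T` preserves `Λ`, the images of `(1, 1)`,
`(1 + ω, ω)` and `(√-m, -√-m)` lie in `Λ`; eliminating the entries of one row of `T` from these
three conditions leaves a quadratic polynomial in `ω` over `ℤ[√-m]`, whose coefficients must vanish.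
Comparing the relations of the two rows, the second one conjugated, forces `T = diag(x, x̄)`.
-/

open Matrix Complex

theorem int_eq_zero_of_linearIndependent {x y : ℝ} (hli : LinearIndependent ℚ ![1, x, y])
    {a b c : ℤ} (h : a + b * x + c * y = 0) : a = 0 ∧ b = 0 ∧ c = 0 := by
  have := Fintype.linearIndependent_iff.1 hli ![(a : ℚ), b, c] (by
    simp only [Fin.sum_univ_three, Rat.smul_def, cons_val_zero, cons_val_one, cons_val,
      Rat.cast_intCast, mul_one]
    linear_combination h)
  exact ⟨by simpa using this 0, by simpa using this 1, by simpa using this 2⟩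

namespace Zsqrtd

variable {A : Type*} [CommRing A] {d : ℤ}

def latticeMap (ι : ℤ√d →+* A) (ω : A) : ℤ√d × ℤ√d →+ (Fin 2 → A) where
  toFun p := ![ι p.1 + ι p.2 * (1 + ω), ι (star p.1) + ι (star p.2) * ω]
  map_zero' := by simp
  map_add' p q := by
    ext i
    fin_cases i <;> simp only [Prod.fst_add, Prod.snd_add, map_add, star_add, Fin.zero_eta,
      Fin.mk_one, cons_val_zero, cons_val_one, cons_val_fin_one, Pi.add_apply] <;> ring

variable (ι : ℤ√d →+* A) (ω : A)

theorem closure_latticeMap_basis :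
    AddSubgroup.closure {latticeMap ι ω (1, 0), latticeMap ι ω (0, 1),
      latticeMap ι ω (sqrtd, 0), latticeMap ι ω (0, sqrtd)} = (latticeMap ι ω).range := by
  apply _root_.le_antisymm
  · rw [AddSubgroup.closure_le]
    rintro _ (rfl | rfl | rfl | rfl) <;> exact ⟨_, rfl⟩
  · rintro _ ⟨⟨x, y⟩, rfl⟩
    have hxy : (x, y) = x.re • ((1 : ℤ√d), (0 : ℤ√d)) + x.im • (sqrtd, 0) + y.re • (0, 1) +
        y.im • (0, sqrtd) := by
      ext <;> simp
    rw [hxy]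
    simp only [map_add, map_zsmul]
    refine add_mem (add_mem (add_mem ?_ ?_) ?_) ?_ <;>
      exact zsmul_mem (AddSubgroup.subset_closure (by simp)) _

theorem diagonal_mulVec_latticeMap (x : ℤ√d) (p : ℤ√d × ℤ√d) :
    !![ι x, 0; 0, ι (star x)] *ᵥ latticeMap ι ω p = latticeMap ι ω (x * p.1, x * p.2) := by
  ext i
  fin_cases i <;> simp only [latticeMap, AddMonoidHom.coe_mk, ZeroHom.coe_mk, mulVec, dotProduct,
      Fin.sum_univ_two, Fin.zero_eta, Fin.mk_one, of_apply, cons_val', cons_val_zero, cons_val_one,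
      cons_val_fin_one, empty_val', zero_mul, add_zero, zero_add, map_mul, star_mul] <;> ring

theorem sqrtd_ne_zero : (sqrtd : ℤ√d) ≠ 0 := fun h => by simpa using congrArg im h

theorem star_sqrtd : star (sqrtd : ℤ√d) = -sqrtd := by ext <;> simp

def QuadraticIndependent : Prop :=
  ∀ c₀ c₁ c₂ : ℤ√d, ι c₀ + ι c₁ * ω + ι c₂ * ω ^ 2 = 0 → c₀ = 0 ∧ c₁ = 0 ∧ c₂ = 0

variable {ι ω}

theorem QuadraticIndependent.isDomain [IsDomain A] (hind : QuadraticIndependent ι ω) :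
    IsDomain (ℤ√d) :=
  ((injective_iff_map_eq_zero ι).2 fun c hc => (hind c 0 0 (by simp [hc])).1).isDomain ι

/-- `ε = 1` handles the first row of `T`, `ε = 0` the second. -/
theorem QuadraticIndependent.row_relations [IsDomain A] (hind : QuadraticIndependent ι ω)
    (ε : ℤ) {κ α β : A} {x₁ y₁ x₂ y₂ x₃ y₃ : ℤ√d} (hκ : κ = ε + ω)
    (h₁ : ι x₁ + ι y₁ * κ = α + β)
    (h₂ : ι x₂ + ι y₂ * κ = α * (1 + ω) + β * ω)
    (h₃ : ι x₃ + ι y₃ * κ = α * ι sqrtd + β * ι (star sqrtd)) :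
    y₁ = 0 ∧ sqrtd * (2 * y₂ - 2 * x₁) = y₃ ∧
      sqrtd * (2 * x₂ + 2 * (ε : ℤ√d) * y₂ - x₁) = x₃ + (ε : ℤ√d) * y₃ := by
  have := hind.isDomain
  obtain ⟨c₀, c₁, c₂⟩ := hind
    (sqrtd * (2 * x₂ + 2 * (ε : ℤ√d) * y₂ - x₁ - (ε : ℤ√d) * y₁) - x₃ - (ε : ℤ√d) * y₃)
    (sqrtd * (2 * y₂ - 2 * x₁ - (2 * (ε : ℤ√d) + 1) * y₁) - y₃) (-2 * sqrtd * y₁) (by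
      simp only [map_sub, map_mul, map_add, map_neg, map_ofNat, map_intCast, map_one]
      rw [star_sqrtd, map_neg] at h₃
      subst hκ
      linear_combination 2 * ι sqrtd * h₂ - ι sqrtd * (2 * ω + 1) * h₁ - h₃)
  have hy₁ : y₁ = 0 := by simpa [sqrtd_ne_zero] using c₂
  subst hy₁
  exact ⟨rfl, by linear_combination c₁, by linear_combination c₀⟩

theorem QuadraticIndependent.eq_diagonal [IsDomain A] (hind : QuadraticIndependent ι ω)
    {T : Matrix (Fin 2) (Fin 2) A}
    (hT : ∀ v ∈ (latticeMap ι ω).range, T *ᵥ v ∈ (latticeMap ι ω).range) :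
    ∃ x, T = !![ι x, 0; 0, ι (star x)] := by
  have := hind.isDomain
  obtain ⟨⟨x₁, y₁⟩, h₁⟩ := hT _ ⟨(1, 0), rfl⟩
  obtain ⟨⟨x₂, y₂⟩, h₂⟩ := hT _ ⟨(0, 1), rfl⟩
  obtain ⟨⟨x₃, y₃⟩, h₃⟩ := hT _ ⟨(sqrtd, 0), rfl⟩
  obtain ⟨e₁, f₁⟩ : _ ∧ _ := ⟨congrFun h₁ 0, congrFun h₁ 1⟩
  obtain ⟨e₂, f₂⟩ : _ ∧ _ := ⟨congrFun h₂ 0, congrFun h₂ 1⟩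
  obtain ⟨e₃, f₃⟩ : _ ∧ _ := ⟨congrFun h₃ 0, congrFun h₃ 1⟩
  simp only [latticeMap, AddMonoidHom.coe_mk, ZeroHom.coe_mk, cons_val_zero, cons_val_one,
    cons_val_fin_one, mulVec, dotProduct, Fin.sum_univ_two, map_one, map_zero, star_one, star_zero,
    zero_mul, add_zero, zero_add, mul_one, one_mul] at e₁ e₂ e₃ f₁ f₂ f₃
  obtain ⟨hy₁, hy₃, hx₃⟩ := hind.row_relations 1 (by simp) e₁ e₂ e₃
  obtain ⟨-, hy₃', hx₃'⟩ := hind.row_relations 0 (by simp) f₁ f₂ f₃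
  replace hy₃' := congrArg star hy₃'
  replace hx₃' := congrArg star hx₃'
  simp only [Int.cast_one, Int.cast_zero, one_mul, mul_one, zero_mul, mul_zero, add_zero,
    star_mul', star_sqrtd, star_sub, star_ofNat, star_star, neg_mul] at hx₃ hy₃' hx₃'
  have h4 : (4 * sqrtd : ℤ√d) ≠ 0 := mul_ne_zero (by simp) sqrtd_ne_zero
  have hy₂ : y₂ = x₁ := sub_eq_zero.1 <| (mul_eq_zero.1
    (by linear_combination hy₃ - hy₃' : 4 * sqrtd * (y₂ - x₁) = 0)).resolve_left h4
  subst y₂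
  have hx₂ : x₂ = 0 := (mul_eq_zero.1
    (by linear_combination hx₃ - hx₃' - hy₃ : 4 * sqrtd * x₂ = 0)).resolve_left h4
  subst x₂ y₁
  simp only [star_zero, map_zero, zero_mul, zero_add, add_zero] at e₁ e₂ f₁ f₂
  have h₀₀ : T 0 0 = ι x₁ := by linear_combination ω * e₁ - e₂
  have h₀₁ : T 0 1 = 0 := by linear_combination e₂ - (1 + ω) * e₁
  have h₁₀ : T 1 0 = 0 := by linear_combination ω * f₁ - f₂
  have h₁₁ : T 1 1 = ι (star x₁) := by linear_combination f₂ - (1 + ω) * f₁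
  exact ⟨x₁, by rw [eta_fin_two T, h₀₀, h₀₁, h₁₀, h₁₁]⟩

theorem QuadraticIndependent.setOf_mapsTo_eq [IsDomain A] (hind : QuadraticIndependent ι ω) :
    {T : Matrix (Fin 2) (Fin 2) A |
      ∀ v ∈ (latticeMap ι ω).range, T *ᵥ v ∈ (latticeMap ι ω).range} =
      {T | ∃ x, T = !![ι x, 0; 0, ι (star x)]} := by
  ext T
  refine ⟨hind.eq_diagonal, ?_⟩
  rintro ⟨x, rfl⟩ _ ⟨p, rfl⟩
  exact ⟨_, (diagonal_mulVec_latticeMap ι ω x p).symm⟩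

noncomputable def toComplex (m : ℕ) : ℤ√(-m) →+* ℂ :=
  lift ⟨I * Real.sqrt m, by
    push_cast
    rw [mul_mul_mul_comm, I_mul_I, ← ofReal_mul, Real.mul_self_sqrt m.cast_nonneg]
    simp⟩

theorem toComplex_apply (m : ℕ) (x : ℤ√(-m)) :
    toComplex m x = x.re + x.im * (I * Real.sqrt m) :=
  rfl

theorem quadraticIndependent_toComplex {m : ℕ} (hm : m ≠ 0) {r : ℝ}
    (hli : LinearIndependent ℚ ![1, r * Real.sqrt m, r ^ 2]) :
    QuadraticIndependent (toComplex m) (r * I) := by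
  intro c₀ c₁ c₂ h
  -- the real part of `h`, and `√m` times its imaginary part, are relations in `1, r√m, r²`
  have hre := congrArg Complex.re h
  have him := congrArg Complex.im h
  simp only [toComplex_apply, pow_two, add_re, add_im, mul_re, mul_im, intCast_re, intCast_im,
    ofReal_re, ofReal_im, I_re, I_im, zero_re, zero_im] at hre him
  have hq : Real.sqrt m * Real.sqrt m = m := Real.mul_self_sqrt m.cast_nonneg
  obtain ⟨h₀, h₁, h₂⟩ := int_eq_zero_of_linearIndependent hli
    (a := c₀.re) (b := -c₁.im) (c := -c₂.re) (by push_cast; linear_combination hre)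
  obtain ⟨h₀', h₁', h₂'⟩ := int_eq_zero_of_linearIndependent hli
    (a := c₀.im * m) (b := c₁.re) (c := -c₂.im * m) (by
      push_cast
      linear_combination Real.sqrt m * him - (c₀.im - c₂.im * r ^ 2) * hq)
  simp only [neg_eq_zero, mul_eq_zero, Int.natCast_eq_zero, hm, or_false] at h₁ h₂ h₀' h₂'
  exact ⟨Zsqrtd.ext h₀ h₀', Zsqrtd.ext h₁' h₁, Zsqrtd.ext h₂ h₂'⟩

end Zsqrtd

/-- for `m ≥ 1` and `r ∈ ℝ` with `1, r√m, r²` ℚ-linearly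
independent, the endomorphism ring of the lattice spanned by the columns of
`[[1, 1+ri, √-m, √-m(1+ri)],[1, ri, -√-m, -√-m·ri]]` (with `√-m = i√m`) is
`{diag(n₁+n₂√-m, n₁-n₂√-m) : n₁,n₂ ∈ ℤ} ≅ ℤ[√-m]`. -/
theorem stmt_16 (m : ℕ) (hm : 1 ≤ m) (r : ℝ)
    (hli : LinearIndependent ℚ ![(1 : ℝ), r * Real.sqrt m, r ^ 2])
    (s : ℂ) (hs : s = Complex.I * (Real.sqrt m : ℂ))
    (Λ : AddSubgroup (Fin 2 → ℂ))
    (hΛ : Λ = AddSubgroup.closure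
      {![1, 1], ![1 + r * Complex.I, r * Complex.I],
       ![s, -s], ![s * (1 + r * Complex.I), -s * (r * Complex.I)]}) :
    {T : Matrix (Fin 2) (Fin 2) ℂ | ∀ v ∈ Λ, T.mulVec v ∈ Λ} =
      {T | ∃ n₁ n₂ : ℤ, T = !![(n₁ : ℂ) + n₂ * s, 0; 0, (n₁ : ℂ) - n₂ * s]} := by
  have hΛ' : Λ = (Zsqrtd.latticeMap (Zsqrtd.toComplex m) (r * I)).range := by
    rw [hΛ, ← Zsqrtd.closure_latticeMap_basis]
    congr! <;> ext i <;> fin_cases i <;> simp [Zsqrtd.latticeMap, Zsqrtd.toComplex_apply, hs]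
  have hdiag (x : ℤ√(-m)) : !![Zsqrtd.toComplex m x, 0; 0, Zsqrtd.toComplex m (star x)] =
      !![(x.re : ℂ) + x.im * s, 0; 0, (x.re : ℂ) - x.im * s] := by
    simp [Zsqrtd.toComplex_apply, hs, sub_eq_add_neg]
  rw [hΛ', (Zsqrtd.quadraticIndependent_toComplex (by omega) hli).setOf_mapsTo_eq]
  ext T
  simp only [Set.mem_ofPred_eq, hdiag]
  exact ⟨fun ⟨x, hx⟩ => ⟨x.re, x.im, hx⟩, fun ⟨n₁, n₂, h⟩ => ⟨⟨n₁, n₂⟩, h⟩⟩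
end

section
/- Let m, n ≥ 1 be integers with mn not a perfect square. Let Λ ⊆ ℂ² be the lattice spanned over ℤ by the columns of [[1, 1+√(-n), √(-m), √(-m)(1+√(-n))],[1, √(-n), -√(-m), -√(-m)√(-n)]]. Then End(Λ) = ℤ + ℤI + ℤJ + ℤK where I = diag(√(-m), -√(-m)), J = [[0, 1+2√(-n)],[-1+2√(-n), 0]], K = IJ, and these satisfy I² = -m, J² = -1-4n, IJ = -JI. -/
/-!
Write `w₁, …, w₄` for the four generators of `Λ`. Both coordinates of a point of `Λ` lie in the ring
spanned by `1, √-m, √-n, √-m√-n`, and these four numbers are linearly independent over `ℤ`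
precisely because `mn` is not a square. The order `ℤ + ℤI + ℤJ + ℤIJ` preserves `Λ` because `I` and
`J` map each `wᵢ` into `Λ`. Conversely, an endomorphism `T` of `Λ` is determined by `T w₁` and
`T w₃`, since `w₁, w₃` is a `ℂ`-basis. Applying `T` to the `ℂ`-linear relation
`2√-m · w₂ = (√-m + 2√-m√-n) · w₁ + w₃` and comparing coordinates in that basis of the ring
forces `T w₁` and `T w₃` to be the values of an element of the order.
-/

open Matrix Complex

theorem AddSubgroup.mem_closure_four {G : Type*} [AddCommGroup G] {x₁ x₂ x₃ x₄ v : G} :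
    v ∈ AddSubgroup.closure {x₁, x₂, x₃, x₄} ↔
      ∃ a b c d : ℤ, a • x₁ + b • x₂ + c • x₃ + d • x₄ = v := by
  simp only [← Submodule.span_int_eq_addSubgroupClosure, Submodule.mem_toAddSubgroup,
    Submodule.mem_span_insert, Submodule.mem_span_singleton]
  constructor
  · rintro ⟨a, _, ⟨b, _, ⟨c, _, ⟨d, rfl⟩, rfl⟩, rfl⟩, rfl⟩
    exact ⟨a, b, c, d, by abel⟩
  · rintro ⟨a, b, c, d, rfl⟩
    exact ⟨a, _, ⟨b, _, ⟨c, _, ⟨d, rfl⟩, rfl⟩, rfl⟩, by abel⟩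

section Stabilizer

variable {ι R : Type*} [Fintype ι] [DecidableEq ι] [CommRing R]

def AddSubgroup.mulVecStabilizer (Λ : AddSubgroup (ι → R)) : Subring (Matrix ι ι R) where
  carrier := {T | ∀ v ∈ Λ, T *ᵥ v ∈ Λ}
  one_mem' v hv := by rwa [one_mulVec]
  mul_mem' hS hT v hv := by rw [← mulVec_mulVec]; exact hS _ (hT v hv)
  zero_mem' v _ := by rw [zero_mulVec]; exact Λ.zero_mem
  add_mem' hS hT v hv := by rw [add_mulVec]; exact Λ.add_mem (hS v hv) (hT v hv)
  neg_mem' hT v hv := by rw [neg_mulVec]; exact Λ.neg_mem (hT v hv)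

theorem AddSubgroup.mem_mulVecStabilizer_closure_iff {S : Set (ι → R)} {T : Matrix ι ι R} :
    T ∈ (AddSubgroup.closure S).mulVecStabilizer ↔ ∀ s ∈ S, T *ᵥ s ∈ AddSubgroup.closure S := by
  refine ⟨fun hT s hs ↦ hT s (AddSubgroup.subset_closure hs), fun hT ↦ ?_⟩
  have : AddSubgroup.closure S ≤ (AddSubgroup.closure S).comap (T.mulVecLin.toAddMonoidHom) :=
    (AddSubgroup.closure_le _).2 hT
  exact fun v hv ↦ this hv

end Stabilizer

theorem Matrix.eq_of_mulVec_eq_of_linearIndependent {K : Type*} [Field K]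
    {S T : Matrix (Fin 2) (Fin 2) K} {u v : Fin 2 → K} (huv : LinearIndependent K ![u, v])
    (hu : S *ᵥ u = T *ᵥ u) (hv : S *ᵥ v = T *ᵥ v) : S = T := by
  apply Matrix.toLin'.injective
  apply LinearMap.ext_on_range (huv.span_eq_top_of_card_eq_finrank (by simp))
  intro i
  fin_cases i
  exacts [hu, hv]

def quatI (sm : ℂ) : Matrix (Fin 2) (Fin 2) ℂ := !![sm, 0; 0, -sm]
def quatJ (sn : ℂ) : Matrix (Fin 2) (Fin 2) ℂ := !![0, 1 + 2 * sn; -1 + 2 * sn, 0]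

def gen₁ : Fin 2 → ℂ := ![1, 1]
def gen₂ (sn : ℂ) : Fin 2 → ℂ := ![1 + sn, sn]
def gen₃ (sm : ℂ) : Fin 2 → ℂ := ![sm, -sm]
def gen₄ (sm sn : ℂ) : Fin 2 → ℂ := ![sm * (1 + sn), -sm * sn]

def lattice (sm sn : ℂ) : AddSubgroup (Fin 2 → ℂ) :=
  AddSubgroup.closure {gen₁, gen₂ sn, gen₃ sm, gen₄ sm sn}

section

variable {m n : ℤ} {sm sn : ℂ}

theorem quatI_sq (hsm : sm ^ 2 = -m) : quatI sm ^ 2 = -(m : ℂ) • 1 := by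
  ext i j
  fin_cases i <;> fin_cases j <;> simp [quatI, sq, ← hsm]

theorem quatJ_sq (hsn : sn ^ 2 = -n) : quatJ sn ^ 2 = -(1 + 4 * (n : ℂ)) • 1 := by
  ext i j
  fin_cases i <;> fin_cases j <;> simp [quatJ, sq] <;> linear_combination 4 * hsn

theorem quatI_mul_quatJ : quatI sm * quatJ sn = -(quatJ sn * quatI sm) := by
  ext i j
  fin_cases i <;> fin_cases j <;> simp [quatI, quatJ] <;> ring

theorem quatI_mulVec_gen₁ : quatI sm *ᵥ gen₁ = gen₃ sm := by
  ext i; fin_cases i <;> simp [quatI, gen₁, gen₃]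

theorem quatI_mulVec_gen₂ : quatI sm *ᵥ gen₂ sn = gen₄ sm sn := by
  ext i; fin_cases i <;> simp [quatI, gen₂, gen₄] <;> ring

theorem quatI_mulVec_gen₃ (hsm : sm ^ 2 = -m) : quatI sm *ᵥ gen₃ sm = (-m) • gen₁ := by
  ext i; fin_cases i <;> simp [quatI, gen₁, gen₃] <;> linear_combination hsm

theorem quatI_mulVec_gen₄ (hsm : sm ^ 2 = -m) : quatI sm *ᵥ gen₄ sm sn = (-m) • gen₂ sn := by
  ext i; fin_cases i <;> simp [quatI, gen₂, gen₄]
  · linear_combination (1 + sn) * hsm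
  · linear_combination sn * hsm

theorem quatJ_mulVec_gen₁ : quatJ sn *ᵥ gen₁ = -gen₁ + (2 : ℤ) • gen₂ sn := by
  ext i; fin_cases i <;> simp [quatJ, gen₁, gen₂]; ring

theorem quatJ_mulVec_gen₂ (hsn : sn ^ 2 = -n) :
    quatJ sn *ᵥ gen₂ sn = -(2 * n + 1 : ℤ) • gen₁ + gen₂ sn := by
  ext i; fin_cases i <;> simp [quatJ, gen₁, gen₂] <;> linear_combination 2 * hsn

theorem quatJ_mulVec_gen₃ : quatJ sn *ᵥ gen₃ sm = gen₃ sm - (2 : ℤ) • gen₄ sm sn := by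
  ext i; fin_cases i <;> simp [quatJ, gen₃, gen₄] <;> ring

theorem quatJ_mulVec_gen₄ (hsn : sn ^ 2 = -n) :
    quatJ sn *ᵥ gen₄ sm sn = (2 * n + 1 : ℤ) • gen₃ sm - gen₄ sm sn := by
  ext i; fin_cases i <;> simp [quatJ, gen₃, gen₄]
  · linear_combination (-2 * sm) * hsn
  · linear_combination 2 * sm * hsn

theorem gen₁_mem_lattice : gen₁ ∈ lattice sm sn := AddSubgroup.subset_closure (by simp)
theorem gen₂_mem_lattice : gen₂ sn ∈ lattice sm sn := AddSubgroup.subset_closure (by simp)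
theorem gen₃_mem_lattice : gen₃ sm ∈ lattice sm sn := AddSubgroup.subset_closure (by simp)
theorem gen₄_mem_lattice : gen₄ sm sn ∈ lattice sm sn := AddSubgroup.subset_closure (by simp)

theorem quatI_mem_mulVecStabilizer (hsm : sm ^ 2 = -m) :
    quatI sm ∈ (lattice sm sn).mulVecStabilizer := by
  refine AddSubgroup.mem_mulVecStabilizer_closure_iff.2 ?_
  simp only [Set.mem_insert_iff, Set.mem_singleton_iff, forall_eq_or_imp, forall_eq,
    quatI_mulVec_gen₁, quatI_mulVec_gen₂, quatI_mulVec_gen₃ hsm, quatI_mulVec_gen₄ hsm]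
  exact ⟨gen₃_mem_lattice, gen₄_mem_lattice, zsmul_mem gen₁_mem_lattice _,
    zsmul_mem gen₂_mem_lattice _⟩

theorem quatJ_mem_mulVecStabilizer (hsn : sn ^ 2 = -n) :
    quatJ sn ∈ (lattice sm sn).mulVecStabilizer := by
  refine AddSubgroup.mem_mulVecStabilizer_closure_iff.2 ?_
  simp only [Set.mem_insert_iff, Set.mem_singleton_iff, forall_eq_or_imp, forall_eq,
    quatJ_mulVec_gen₁, quatJ_mulVec_gen₂ hsn, quatJ_mulVec_gen₃, quatJ_mulVec_gen₄ hsn]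
  exact ⟨add_mem (neg_mem gen₁_mem_lattice) (zsmul_mem gen₂_mem_lattice _),
    add_mem (zsmul_mem gen₁_mem_lattice _) gen₂_mem_lattice,
    sub_mem gen₃_mem_lattice (zsmul_mem gen₄_mem_lattice _),
    sub_mem (zsmul_mem gen₃_mem_lattice _) gen₄_mem_lattice⟩

theorem quatOrder_mem_mulVecStabilizer (hsm : sm ^ 2 = -m) (hsn : sn ^ 2 = -n) (p q r s : ℤ) :
    p • 1 + q • quatI sm + r • quatJ sn + s • (quatI sm * quatJ sn) ∈
      (lattice sm sn).mulVecStabilizer := by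
  have hI := quatI_mem_mulVecStabilizer (sn := sn) hsm
  have hJ := quatJ_mem_mulVecStabilizer (sm := sm) hsn
  exact add_mem (add_mem (add_mem (zsmul_mem (one_mem _) p) (zsmul_mem hI q))
    (zsmul_mem hJ r)) (zsmul_mem (mul_mem hI hJ) s)

theorem quatOrder_mulVec_gen₁ (p q r s : ℤ) :
    (p • 1 + q • quatI sm + r • quatJ sn + s • (quatI sm * quatJ sn)) *ᵥ gen₁ =
      (p - r) • gen₁ + (2 * r) • gen₂ sn + (q - s) • gen₃ sm + (2 * s) • gen₄ sm sn := by
  simp only [add_mulVec, smul_mulVec, one_mulVec, ← mulVec_mulVec, quatJ_mulVec_gen₁,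
    mulVec_add, mulVec_neg, mulVec_smul, quatI_mulVec_gen₁, quatI_mulVec_gen₂]
  module

theorem quatOrder_mulVec_gen₃ (hsm : sm ^ 2 = -m) (p q r s : ℤ) :
    (p • 1 + q • quatI sm + r • quatJ sn + s • (quatI sm * quatJ sn)) *ᵥ gen₃ sm =
      (-m * (q + s)) • gen₁ + (2 * m * s) • gen₂ sn + (p + r) • gen₃ sm +
        (-2 * r) • gen₄ sm sn := by
  simp only [add_mulVec, smul_mulVec, one_mulVec, ← mulVec_mulVec, quatJ_mulVec_gen₃,
    mulVec_sub, mulVec_smul, quatI_mulVec_gen₃ hsm, quatI_mulVec_gen₄ hsm]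
  module

def biquad (sm sn : ℂ) (x₀ x₁ x₂ x₃ : ℤ) : ℂ := x₀ + x₁ * sm + x₂ * sn + x₃ * (sm * sn)

theorem biquad_add (x₀ x₁ x₂ x₃ y₀ y₁ y₂ y₃ : ℤ) :
    biquad sm sn x₀ x₁ x₂ x₃ + biquad sm sn y₀ y₁ y₂ y₃ =
      biquad sm sn (x₀ + y₀) (x₁ + y₁) (x₂ + y₂) (x₃ + y₃) := by
  simp only [biquad]; push_cast; ring

theorem two_mul_biquad (x₀ x₁ x₂ x₃ : ℤ) :
    2 * biquad sm sn x₀ x₁ x₂ x₃ = biquad sm sn (2 * x₀) (2 * x₁) (2 * x₂) (2 * x₃) := by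
  simp only [biquad]; push_cast; ring

theorem sm_mul_biquad (hsm : sm ^ 2 = -m) (x₀ x₁ x₂ x₃ : ℤ) :
    sm * biquad sm sn x₀ x₁ x₂ x₃ = biquad sm sn (-m * x₁) x₀ (-m * x₃) x₂ := by
  simp only [biquad]; push_cast; linear_combination (x₁ + x₃ * sn : ℂ) * hsm

theorem sn_mul_biquad (hsn : sn ^ 2 = -n) (x₀ x₁ x₂ x₃ : ℤ) :
    sn * biquad sm sn x₀ x₁ x₂ x₃ = biquad sm sn (-n * x₂) (-n * x₃) x₀ x₁ := by
  simp only [biquad]; push_cast; linear_combination (x₂ + x₃ * sm : ℂ) * hsn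

theorem biquad_inj (hind : LinearIndependent ℤ ![1, sm, sn, sm * sn])
    {x₀ x₁ x₂ x₃ y₀ y₁ y₂ y₃ : ℤ} :
    biquad sm sn x₀ x₁ x₂ x₃ = biquad sm sn y₀ y₁ y₂ y₃ ↔
      x₀ = y₀ ∧ x₁ = y₁ ∧ x₂ = y₂ ∧ x₃ = y₃ := by
  refine ⟨fun h ↦ ?_, by rintro ⟨rfl, rfl, rfl, rfl⟩; rfl⟩
  have := Fintype.linearIndependent_iff.1 hind ![x₀ - y₀, x₁ - y₁, x₂ - y₂, x₃ - y₃] (by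
    simp only [biquad] at h
    simp [Fin.sum_univ_four]
    linear_combination h)
  exact ⟨sub_eq_zero.1 (this 0), sub_eq_zero.1 (this 1), sub_eq_zero.1 (this 2),
    sub_eq_zero.1 (this 3)⟩

theorem gen_combination_eq_biquad (a b c d : ℤ) :
    a • gen₁ + b • gen₂ sn + c • gen₃ sm + d • gen₄ sm sn =
      ![biquad sm sn (a + b) (c + d) b d, biquad sm sn a (-c) b (-d)] := by
  ext i; fin_cases i <;> simp [gen₁, gen₂, gen₃, gen₄, biquad] <;> ring

theorem gen_relation : (2 * sm) • gen₂ sn = (sm + 2 * (sm * sn)) • gen₁ + gen₃ sm := by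
  ext i; fin_cases i <;> simp [gen₁, gen₂, gen₃] <;> ring

theorem biquad_relation (hsm : sm ^ 2 = -m) (hsn : sn ^ 2 = -n)
    (hind : LinearIndependent ℤ ![1, sm, sn, sm * sn]) {a₀ a₁ a₂ a₃ b₀ b₁ b₂ b₃ c₀ c₁ c₂ c₃ : ℤ}
    (h : 2 * sm * biquad sm sn b₀ b₁ b₂ b₃ =
      (sm + 2 * (sm * sn)) * biquad sm sn a₀ a₁ a₂ a₃ + biquad sm sn c₀ c₁ c₂ c₃) :
    2 * m * b₁ = m * a₁ - 2 * m * n * a₃ - c₀ ∧ 2 * b₀ = a₀ - 2 * n * a₂ + c₁ ∧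
      2 * m * b₃ = m * a₃ + 2 * m * a₁ - c₂ ∧ 2 * b₂ = a₂ + 2 * a₀ + c₃ := by
  replace h : 2 * (sm * biquad sm sn b₀ b₁ b₂ b₃) = sm * biquad sm sn a₀ a₁ a₂ a₃ +
      2 * (sm * (sn * biquad sm sn a₀ a₁ a₂ a₃)) + biquad sm sn c₀ c₁ c₂ c₃ := by
    linear_combination h
  simp only [sm_mul_biquad hsm, sn_mul_biquad hsn, two_mul_biquad, biquad_add,
    biquad_inj hind] at h
  obtain ⟨h₀, h₁, h₂, h₃⟩ := h
  exact ⟨by linarith, by linarith, by linarith, by linarith⟩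

theorem linearIndependent_gen₁_gen₃ (hsm0 : sm ≠ 0) : LinearIndependent ℂ ![gen₁, gen₃ sm] := by
  refine LinearIndependent.pair_iff.2 fun s t h ↦ ?_
  have h₀ : s + t * sm = 0 := by simpa [gen₁, gen₃] using congrFun h 0
  have h₁ : s - t * sm = 0 := by simpa [gen₁, gen₃, sub_eq_add_neg] using congrFun h 1
  have ht : t = 0 := by
    simpa [hsm0] using (by linear_combination h₀ - h₁ : 2 * t * sm = 0)
  exact ⟨by simpa [ht] using h₀, ht⟩

theorem mulVec_gen₃_of_mem_mulVecStabilizer (hsm : sm ^ 2 = -m) (hsn : sn ^ 2 = -n)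
    (hind : LinearIndependent ℤ ![1, sm, sn, sm * sn]) {T : Matrix (Fin 2) (Fin 2) ℂ}
    (hT : T ∈ (lattice sm sn).mulVecStabilizer) {a₁ a₂ a₃ a₄ : ℤ}
    (hA : a₁ • gen₁ + a₂ • gen₂ sn + a₃ • gen₃ sm + a₄ • gen₄ sm sn = T *ᵥ gen₁) :
    Even a₂ ∧ Even a₄ ∧ T *ᵥ gen₃ sm =
      (-m * (a₃ + a₄)) • gen₁ + (m * a₄) • gen₂ sn + (a₁ + a₂) • gen₃ sm + (-a₂) • gen₄ sm sn := by
  have hm : m ≠ 0 := by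
    rintro rfl
    exact hind.ne_zero 1 (by simpa using hsm)
  obtain ⟨b₁, b₂, b₃, b₄, hB⟩ := AddSubgroup.mem_closure_four.1 (hT _ gen₂_mem_lattice)
  obtain ⟨c₁, c₂, c₃, c₄, hC⟩ := AddSubgroup.mem_closure_four.1 (hT _ gen₃_mem_lattice)
  have hrel := congrArg (T *ᵥ ·) (gen_relation (sm := sm) (sn := sn))
  simp only [mulVec_smul, mulVec_add, ← hA, ← hB, ← hC, gen_combination_eq_biquad] at hrel
  obtain ⟨e₁, e₂, e₃, e₄⟩ := biquad_relation hsm hsn hind (by simpa using congrFun hrel 0)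
  obtain ⟨e₅, e₆, e₇, e₈⟩ := biquad_relation hsm hsn hind (by simpa using congrFun hrel 1)
  have hc₂ : c₂ = m * a₄ := by linarith
  have hmb₄ : m * b₄ = m * (a₃ + a₄) := by linarith
  have hc₁ : c₁ = -m * (a₃ + a₄) := by linarith
  have hc₃ : c₃ = a₁ + a₂ := by linarith
  have hc₄ : c₄ = -a₂ := by linarith
  refine ⟨⟨-b₁ - n * a₂, by linarith⟩, ⟨-b₃ - n * a₄, ?_⟩, ?_⟩
  · have := mul_left_cancel₀ hm (by linarith : m * a₄ = m * (-2 * b₃ - 2 * n * a₄))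
    linarith
  · rw [← hC, hc₁, hc₂, hc₃, hc₄]

theorem exists_eq_quatOrder_of_mem_mulVecStabilizer (hsm : sm ^ 2 = -m) (hsn : sn ^ 2 = -n)
    (hind : LinearIndependent ℤ ![1, sm, sn, sm * sn]) {T : Matrix (Fin 2) (Fin 2) ℂ}
    (hT : T ∈ (lattice sm sn).mulVecStabilizer) :
    ∃ p q r s : ℤ, T = p • 1 + q • quatI sm + r • quatJ sn + s • (quatI sm * quatJ sn) := by
  obtain ⟨a₁, a₂, a₃, a₄, hA⟩ := AddSubgroup.mem_closure_four.1 (hT _ gen₁_mem_lattice)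
  obtain ⟨⟨r, rfl⟩, ⟨s, rfl⟩, hC⟩ := mulVec_gen₃_of_mem_mulVecStabilizer hsm hsn hind hT hA
  have hsm0 : sm ≠ 0 := hind.ne_zero 1
  refine ⟨a₁ + r, a₃ + s, r, s,
    eq_of_mulVec_eq_of_linearIndependent (linearIndependent_gen₁_gen₃ hsm0) ?_ ?_⟩
  · rw [← hA, quatOrder_mulVec_gen₁]
    module
  · rw [hC, quatOrder_mulVec_gen₃ hsm]
    module

end

theorem linearIndependent_biquadratic {μ ν : ℝ} {n : ℤ} (hμν : Irrational (μ * ν))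
    (hν : ν ^ 2 = n) :
    LinearIndependent ℤ
      ![1, Complex.I * μ, Complex.I * ν, Complex.I * μ * (Complex.I * ν)] := by
  refine Fintype.linearIndependent_iff.2 fun g hg ↦ ?_
  have hre : (g 0 : ℝ) = g 3 * (μ * ν) := by
    have := congrArg Complex.re hg
    simp [Fin.sum_univ_four] at this
    linarith
  have him : (g 1 : ℝ) * μ + g 2 * ν = 0 := by
    simpa [Fin.sum_univ_four] using congrArg Complex.im hg
  have hν0 : ν ≠ 0 := by
    rintro rfl
    simp at hμν
  have h₃ : g 3 = 0 := by
    by_contra h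
    exact (hμν.intCast_mul h).ne_int (g 0) hre.symm
  have h₁ : g 1 = 0 := by
    by_contra h
    exact (hμν.intCast_mul h).ne_int (-(g 2 * n)) (by
      push_cast
      linear_combination ν * him - (g 2 : ℝ) * hν)
  have h₂ : g 2 = 0 := by
    simpa [h₁, hν0] using him
  intro i
  fin_cases i
  · simpa [h₃] using hre
  exacts [h₁, h₂, h₃]

theorem irrational_sqrt_mul_sqrt {m n : ℕ} (hmn : ¬∃ k : ℤ, k ^ 2 = (m : ℤ) * n) :
    Irrational (√m * √n) := by
  rw [← Real.sqrt_mul (Nat.cast_nonneg m), ← Nat.cast_mul]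
  exact irrational_sqrt_natCast_iff.2 fun ⟨k, hk⟩ ↦ hmn ⟨k, by rw [sq]; exact_mod_cast hk.symm⟩

theorem I_mul_sqrt_sq (x : ℕ) : (Complex.I * (√x : ℝ)) ^ 2 = -((x : ℤ) : ℂ) := by
  rw [mul_pow, Complex.I_sq, ← Complex.ofReal_pow, Real.sq_sqrt (Nat.cast_nonneg x)]
  simp

theorem stmt_17_general (m n : ℕ)
    (hns : ¬ ∃ k : ℤ, k ^ 2 = (m : ℤ) * n)
    (sm sn : ℂ) (hsm : sm = Complex.I * (Real.sqrt m : ℂ))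
    (hsn : sn = Complex.I * (Real.sqrt n : ℂ))
    (Λ : AddSubgroup (Fin 2 → ℂ))
    (hΛ : Λ = AddSubgroup.closure
      {![1, 1], ![1 + sn, sn], ![sm, -sm], ![sm * (1 + sn), -sm * sn]})
    (I J : Matrix (Fin 2) (Fin 2) ℂ)
    (hI : I = !![sm, 0; 0, -sm])
    (hJ : J = !![0, 1 + 2 * sn; -1 + 2 * sn, 0]) :
    I ^ 2 = -(m : ℂ) • (1 : Matrix (Fin 2) (Fin 2) ℂ) ∧
    J ^ 2 = -(1 + 4 * (n : ℂ)) • (1 : Matrix (Fin 2) (Fin 2) ℂ) ∧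
    I * J = -(J * I) ∧
    {T : Matrix (Fin 2) (Fin 2) ℂ | ∀ v ∈ Λ, T.mulVec v ∈ Λ} =
      {T | ∃ n₀ n₁ n₂ n₃ : ℤ,
        T = n₀ • (1 : Matrix (Fin 2) (Fin 2) ℂ) + n₁ • I + n₂ • J + n₃ • (I * J)} := by
  subst hsm hsn hΛ hI hJ
  have hsm := I_mul_sqrt_sq m
  have hsn := I_mul_sqrt_sq n
  have hind := linearIndependent_biquadratic (irrational_sqrt_mul_sqrt hns)
    (Real.sq_sqrt (Nat.cast_nonneg n))
  refine ⟨by simpa only [quatI, Int.cast_natCast] using quatI_sq hsm,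
    by simpa only [quatJ, Int.cast_natCast] using quatJ_sq hsn, quatI_mul_quatJ, ?_⟩
  ext T
  exact ⟨exists_eq_quatOrder_of_mem_mulVecStabilizer hsm hsn hind,
    fun ⟨p, q, r, s, hT⟩ ↦ hT ▸ quatOrder_mem_mulVecStabilizer hsm hsn p q r s⟩

/-- for `m, n ≥ 1` with `mn` not a perfect square, the
endomorphism ring of the lattice spanned by the columns of
`[[1, 1+√-n, √-m, √-m(1+√-n)],[1, √-n, -√-m, -√-m√-n]]` is the order
`ℤ + ℤI + ℤJ + ℤK` with `I = diag(√-m,-√-m)`, `J = [[0,1+2√-n],[-1+2√-n,0]]`,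
`K = IJ`, and `I² = -m`, `J² = -1-4n`, `IJ = -JI`. -/
theorem stmt_17 (m n : ℕ) (hm : 1 ≤ m) (hn : 1 ≤ n)
    (hns : ¬ ∃ k : ℤ, k ^ 2 = (m : ℤ) * n)
    (sm sn : ℂ) (hsm : sm = Complex.I * (Real.sqrt m : ℂ))
    (hsn : sn = Complex.I * (Real.sqrt n : ℂ))
    (Λ : AddSubgroup (Fin 2 → ℂ))
    (hΛ : Λ = AddSubgroup.closure
      {![1, 1], ![1 + sn, sn], ![sm, -sm], ![sm * (1 + sn), -sm * sn]})
    (I J : Matrix (Fin 2) (Fin 2) ℂ)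
    (hI : I = !![sm, 0; 0, -sm])
    (hJ : J = !![0, 1 + 2 * sn; -1 + 2 * sn, 0]) :
    I ^ 2 = -(m : ℂ) • (1 : Matrix (Fin 2) (Fin 2) ℂ) ∧
    J ^ 2 = -(1 + 4 * (n : ℂ)) • (1 : Matrix (Fin 2) (Fin 2) ℂ) ∧
    I * J = -(J * I) ∧
    {T : Matrix (Fin 2) (Fin 2) ℂ | ∀ v ∈ Λ, T.mulVec v ∈ Λ} =
      {T | ∃ n₀ n₁ n₂ n₃ : ℤ,
        T = n₀ • (1 : Matrix (Fin 2) (Fin 2) ℂ) + n₁ • I + n₂ • J + n₃ • (I * J)} :=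
  stmt_17_general m n hns sm sn hsm hsn Λ hΛ I J hI hJ
end
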